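/- arXiv:1909.10862 — 5 statements merged into one kernel-verified Lean document; each statement's English description precedes it below -/
import Mathlib

section
/- Let (x_n)_{n≥0} be a sequence taking values in a compact convex subset S of ℝ^K, (a_n)_{n≥0} a nonincreasing sequence of positive reals with 0 < liminf n·a_n ≤ limsup n·a_n < ∞, and (γ_n)_{n≥0} a sequence in ℝ^K with (1/n) Σ_{i=1}^n γ_i → 0. Let h: S → ℝ^K be continuous, and suppose x_{n+1} = x_n + a_n h(x_n) + a_n γ_n for all n ≥ 0. If the ODE ẋ = h(x) has a unique solution z: ℝ → S, then x_n → z(0) as n → ∞. -/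
/-!
The ODE method. Measure time by `τ_n = a_0 + ⋯ + a_{n-1}`, which diverges since `a_n ≥ b / n`,
and look at the step interpolation of `(x_n)` shifted by `τ_{n_j}` along an arbitrary
subsequence. Summation by parts, using that `a` is nonincreasing with `n a_n ≤ B`, turns the
Cesàro condition on `γ` into the Kushner–Clark condition, so the shifted interpolations satisfy
the integral form of `ẋ = h(x)` up to an error that vanishes. They are therefore asymptotically
Lipschitz, and compactness of `S` gives a further subsequence converging pointwise, first at
rational times and then everywhere. By dominated convergence the limit solves the ODE, hence is
`z`; at time `0` this says `x_{n_j} → z(0)` along a subsequence of every subsequence.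
-/

open Filter
open scoped Topology
open MeasureTheory Set

namespace StochasticApproximation

def tau (a : ℕ → ℝ) (n : ℕ) : ℝ := ∑ i ∈ Finset.range n, a i

/-- For `0 ≤ r` and `tau a → ∞`, the index `n` with `tau a n ≤ r < tau a (n + 1)`. -/
noncomputable def tauIndex (a : ℕ → ℝ) (r : ℝ) : ℕ := sInf {n | r < tau a n} - 1

section TimeScale

variable {a : ℕ → ℝ}

@[simp] theorem tau_zero : tau a 0 = 0 := Finset.sum_range_zero a

theorem tau_succ (n : ℕ) : tau a (n + 1) = tau a n + a n := Finset.sum_range_succ a n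

theorem tau_sub_tau {j k : ℕ} (hjk : j ≤ k) : tau a k - tau a j = ∑ i ∈ Finset.Ico j k, a i :=
  (Finset.sum_Ico_eq_sub a hjk).symm

theorem tau_strictMono (hpos : ∀ n, 0 < a n) : StrictMono (tau a) :=
  strictMono_nat_of_lt_succ fun n => by rw [tau_succ]; linarith [hpos n]

theorem tendsto_tau_atTop {b : ℝ} (hb : 0 < b) (ha0 : ∀ n, 0 ≤ a n)
    (hba : ∀ᶠ n : ℕ in atTop, b ≤ n * a n) : Tendsto (tau a) atTop atTop := by
  refine (not_summable_iff_tendsto_nat_atTop_of_nonneg ha0).1 fun hsum =>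
    Real.not_summable_natCast_inv ((hsum.mul_left b⁻¹).of_norm_bounded_eventually_nat ?_)
  filter_upwards [hba, eventually_gt_atTop 0] with n hn hn0
  have hn0' : (0 : ℝ) < n := Nat.cast_pos.2 hn0
  rw [norm_inv, Real.norm_natCast, inv_mul_eq_div, le_div_iff₀ hb, inv_mul_le_iff₀ hn0']
  exact hn

theorem tendsto_zero_of_natCast_mul_le {B : ℝ} (ha0 : ∀ n, 0 ≤ a n)
    (hB : ∀ᶠ n : ℕ in atTop, n * a n ≤ B) : Tendsto a atTop (𝓝 0) := by
  refine squeeze_zero' (Eventually.of_forall ha0) ?_ (tendsto_const_div_atTop_nhds_zero_nat B)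
  filter_upwards [hB, eventually_gt_atTop 0] with n hn hn0
  exact (le_div_iff₀' (Nat.cast_pos.2 hn0)).2 hn

theorem tauIndex_eq (hpos : ∀ n, 0 < a n) {i : ℕ} {r : ℝ} (h₁ : tau a i ≤ r)
    (h₂ : r < tau a (i + 1)) : tauIndex a r = i := by
  have hmin : sInf {n | r < tau a n} = i + 1 := by
    refine le_antisymm (Nat.sInf_le h₂) (le_csInf ⟨i + 1, h₂⟩ fun n hn => ?_)
    by_contra! hn'
    exact (h₁.trans_lt hn).not_ge ((tau_strictMono hpos).monotone (Nat.lt_succ_iff.mp hn'))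
  simp [tauIndex, hmin]

theorem tauIndex_tau (hpos : ∀ n, 0 < a n) (m : ℕ) : tauIndex a (tau a m) = m :=
  tauIndex_eq hpos le_rfl (tau_strictMono hpos (Nat.lt_succ_self m))

theorem tau_tauIndex_le_and_lt (hpos : ∀ n, 0 < a n) (hdiv : Tendsto (tau a) atTop atTop)
    {r : ℝ} (hr : 0 ≤ r) : tau a (tauIndex a r) ≤ r ∧ r < tau a (tauIndex a r + 1) := by
  classical
  have hex : ∃ n, r < tau a n := (hdiv.eventually_gt_atTop r).exists
  obtain ⟨i, hi⟩ : ∃ i, Nat.find hex = i + 1 :=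
    Nat.exists_eq_succ_of_ne_zero fun h0 => by simpa [h0] using hr.trans_lt (Nat.find_spec hex)
  have h₁ : tau a i ≤ r := not_lt.1 (Nat.find_min hex (hi ▸ Nat.lt_succ_self i))
  have h₂ : r < tau a (i + 1) := hi ▸ Nat.find_spec hex
  rw [tauIndex_eq hpos h₁ h₂]
  exact ⟨h₁, h₂⟩

theorem tauIndex_mono (hdiv : Tendsto (tau a) atTop atTop) : Monotone (tauIndex a) :=
  fun _ r' hr => Nat.sub_le_sub_right
    (Nat.sInf_le (hr.trans_lt (Nat.sInf_mem (hdiv.eventually_gt_atTop r').exists))) 1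

theorem tendsto_tauIndex_atTop (hpos : ∀ n, 0 < a n) (hdiv : Tendsto (tau a) atTop atTop) :
    Tendsto (tauIndex a) atTop atTop :=
  (tauIndex_mono hdiv).tendsto_atTop_atTop fun m => ⟨tau a m, (tauIndex_tau hpos m).ge⟩

theorem stronglyMeasurable_comp_tauIndex {X : Type*} [TopologicalSpace X]
    (hdiv : Tendsto (tau a) atTop atTop) (f : ℕ → X) :
    StronglyMeasurable fun u => f (tauIndex a u) :=
  StronglyMeasurable.of_discrete.comp_measurable (tauIndex_mono hdiv).measurable

theorem intervalIntegrable_comp_tauIndex {E : Type*} [NormedAddCommGroup E]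
    (hdiv : Tendsto (tau a) atTop atTop) {f : ℕ → E} {M : ℝ} (hf : ∀ n, ‖f n‖ ≤ M) (α β : ℝ) :
    IntervalIntegrable (fun u => f (tauIndex a u)) volume α β :=
  intervalIntegrable_const.mono_fun'
    (stronglyMeasurable_comp_tauIndex hdiv f).aestronglyMeasurable (ae_of_all _ fun _ => hf _)

theorem integral_comp_tauIndex {E : Type*} [NormedAddCommGroup E] [NormedSpace ℝ E]
    [CompleteSpace E] (hpos : ∀ n, 0 < a n) (f : ℕ → E) {j k : ℕ} (hjk : j ≤ k) :
    ∫ u in tau a j..tau a k, f (tauIndex a u) = ∑ i ∈ Finset.Ico j k, a i • f i := by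
  have hle i : tau a i ≤ tau a (i + 1) := (tau_strictMono hpos (Nat.lt_succ_self i)).le
  have hcell i : EqOn (fun u => f (tauIndex a u)) (fun _ => f i) (Ioo (tau a i) (tau a (i + 1))) :=
    fun _ hu => congrArg f (tauIndex_eq hpos hu.1.le hu.2)
  rw [← intervalIntegral.sum_integral_adjacent_intervals_Ico hjk fun i _ =>
    intervalIntegrable_const.congr_uIoo (by rw [uIoo_of_le (hle i)]; exact (hcell i).symm)]
  refine Finset.sum_congr rfl fun i _ => ?_
  rw [intervalIntegral.integral_congr_Ioo_of_le (hle i) (hcell i), intervalIntegral.integral_const,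
    tau_succ, add_sub_cancel_left]

end TimeScale

section Noise

variable {E : Type*} [NormedAddCommGroup E] [NormedSpace ℝ E] {a : ℕ → ℝ}

/-- The Kushner–Clark noise condition. -/
def KushnerClark (a : ℕ → ℝ) (γ : ℕ → E) : Prop :=
  ∀ T ε : ℝ, 0 < ε → ∀ᶠ j in atTop, ∀ k, j ≤ k → tau a k - tau a j ≤ T →
    ‖∑ i ∈ Finset.Ico j k, a i • γ i‖ ≤ ε

theorem sum_Ico_smul_sub_eq_by_parts (a : ℕ → ℝ) (Γ : ℕ → E) {j k : ℕ} (hjk : j ≤ k) :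
    ∑ i ∈ Finset.Ico j k, a i • (Γ (i + 1) - Γ i) =
      a k • Γ k - a j • Γ j + ∑ i ∈ Finset.Ico j k, (a i - a (i + 1)) • Γ (i + 1) := by
  rw [← Finset.sum_Ico_sub (fun i => a i • Γ i) hjk, ← Finset.sum_add_distrib]
  refine Finset.sum_congr rfl fun i _ => ?_
  simp only [smul_sub, sub_smul]
  abel

theorem sum_Ico_sub_mul_succ_eq (a : ℕ → ℝ) {j k : ℕ} (hjk : j ≤ k) :
    ∑ i ∈ Finset.Ico j k, (a i - a (i + 1)) * ((i : ℝ) + 1) =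
      tau a k - tau a j - (k * a k - j * a j) := by
  rw [tau_sub_tau hjk, ← Finset.sum_Ico_sub (fun i => (i : ℝ) * a i) hjk, ← Finset.sum_sub_distrib]
  refine Finset.sum_congr rfl fun i _ => ?_
  push_cast
  ring

theorem norm_sum_Ico_smul_sub_le (ha : Antitone a) (ha0 : ∀ n, 0 ≤ a n) {Γ : ℕ → E}
    {ε B : ℝ} (hε : 0 ≤ ε) {j k : ℕ} (hjk : j ≤ k) (hΓ : ∀ n, j ≤ n → ‖Γ n‖ ≤ ε * n)
    (hB : j * a j ≤ B) :
    ‖∑ i ∈ Finset.Ico j k, a i • (Γ (i + 1) - Γ i)‖ ≤ ε * (2 * B + (tau a k - tau a j)) := by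
  have hterm : ∀ c n, 0 ≤ c → j ≤ n → ‖c • Γ n‖ ≤ c * (ε * n) := fun c n hc hn => by
    rw [norm_smul, Real.norm_of_nonneg hc]
    exact mul_le_mul_of_nonneg_left (hΓ n hn) hc
  have hsum : ∑ i ∈ Finset.Ico j k, (a i - a (i + 1)) * (ε * (i + 1 : ℕ)) =
      ε * (tau a k - tau a j - (k * a k - j * a j)) := by
    rw [← sum_Ico_sub_mul_succ_eq a hjk, Finset.mul_sum]
    refine Finset.sum_congr rfl fun i _ => ?_
    push_cast
    ring
  rw [sum_Ico_smul_sub_eq_by_parts a Γ hjk]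
  calc _ ≤ ‖a k • Γ k‖ + ‖a j • Γ j‖ + ∑ i ∈ Finset.Ico j k, ‖(a i - a (i + 1)) • Γ (i + 1)‖ :=
        (norm_add_le _ _).trans (add_le_add (norm_sub_le _ _) (norm_sum_le _ _))
    _ ≤ a k * (ε * k) + a j * (ε * j) +
          ∑ i ∈ Finset.Ico j k, (a i - a (i + 1)) * (ε * (i + 1 : ℕ)) := by
        gcongr with i hi
        · exact hterm _ _ (ha0 k) hjk
        · exact hterm _ _ (ha0 j) le_rfl
        · exact hterm _ _ (sub_nonneg.2 (ha (Nat.le_succ i)))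
            ((Finset.mem_Ico.1 hi).1.trans (Nat.le_succ i))
    _ = ε * (2 * (j * a j) + (tau a k - tau a j)) := by rw [hsum]; ring
    _ ≤ ε * (2 * B + (tau a k - tau a j)) := by gcongr

theorem kushnerClark_of_isLittleO {γ : ℕ → E} (ha : Antitone a) (ha0 : ∀ n, 0 ≤ a n) {B : ℝ}
    (hB : ∀ᶠ n : ℕ in atTop, n * a n ≤ B)
    (hγ : (fun n => ∑ i ∈ Finset.range n, γ i) =o[atTop] (fun n => (n : ℝ))) :
    KushnerClark a γ := by
  intro T ε hε
  obtain ⟨c, hc, hcε⟩ := exists_pos_mul_lt hε |2 * B + T|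
  obtain ⟨N, hN⟩ := eventually_atTop.1 ((hγ.bound hc).and hB)
  filter_upwards [eventually_ge_atTop N] with j hj k hjk hT
  have hΓ : ∀ n, j ≤ n → ‖∑ i ∈ Finset.range n, γ i‖ ≤ c * n := fun n hn => by
    simpa using (hN n (hj.trans hn)).1
  calc ‖∑ i ∈ Finset.Ico j k, a i • γ i‖
      = ‖∑ i ∈ Finset.Ico j k, a i •
          (∑ l ∈ Finset.range (i + 1), γ l - ∑ l ∈ Finset.range i, γ l)‖ := by
        simp only [Finset.sum_range_succ_sub_sum]
    _ ≤ c * (2 * B + (tau a k - tau a j)) :=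
        norm_sum_Ico_smul_sub_le ha ha0 hc.le hjk hΓ (hN j hj).2
    _ ≤ c * |2 * B + T| := by
        gcongr
        exact (by linarith : _ ≤ 2 * B + T).trans (le_abs_self _)
    _ = |2 * B + T| * c := mul_comm _ _
    _ ≤ ε := hcε.le

theorem isLittleO_sum_range_of_tendsto_cesaro {γ : ℕ → E}
    (hγ : Tendsto (fun n : ℕ => (n : ℝ)⁻¹ • ∑ i ∈ Finset.Icc 1 n, γ i) atTop (𝓝 0)) :
    (fun n => ∑ i ∈ Finset.range n, γ i) =o[atTop] (fun n => (n : ℝ)) := by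
  have hS : (fun n => ∑ i ∈ Finset.Icc 1 n, γ i) =o[atTop] (fun n => (n : ℝ)) :=
    Asymptotics.isLittleOTVS_iff_isLittleO.1
      ((Asymptotics.isLittleOTVS_iff_tendsto_inv_smul
        (Eventually.of_forall fun n hn => by simp [Nat.cast_eq_zero.1 hn])).2 hγ)
  have hconst : (fun _ : ℕ => γ 0) =o[atTop] (fun n => (n : ℝ)) :=
    Asymptotics.isLittleO_const_left.2
      (Or.inr (tendsto_norm_atTop_atTop.comp tendsto_natCast_atTop_atTop))
  refine (((hconst.add hS).comp_tendsto (tendsto_sub_atTop_nat 1)).trans_isBigO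
    (Asymptotics.isBigO_of_le _ fun n => ?_)).congr' ?_ EventuallyEq.rfl
  · simp
  · filter_upwards [eventually_ge_atTop 1] with n hn
    obtain ⟨m, rfl⟩ := Nat.exists_eq_add_of_le' hn
    simp only [Function.comp_apply, add_tsub_cancel_right, Finset.range_eq_Ico,
      Finset.sum_eq_sum_Ico_succ_bot (Nat.succ_pos m)]
    rfl

end Noise

section Interpolation

variable {E : Type*} [NormedAddCommGroup E] [NormedSpace ℝ E] {a : ℕ → ℝ}

theorem sub_eq_sum_Ico_of_eq_add {G : Type*} [AddCommGroup G] {x d : ℕ → G}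
    (hrec : ∀ n, x (n + 1) = x n + d n) {j k : ℕ} (hjk : j ≤ k) :
    x k - x j = ∑ i ∈ Finset.Ico j k, d i := by
  rw [← Finset.sum_Ico_sub x hjk]
  exact Finset.sum_congr rfl fun i _ => by rw [hrec, add_sub_cancel_left]

theorem tendsto_sum_Ico_tauIndex_shift {γ : ℕ → E} (hpos : ∀ n, 0 < a n)
    (hdiv : Tendsto (tau a) atTop atTop) (ha_lim : Tendsto a atTop (𝓝 0)) (hγ : KushnerClark a γ)
    {s t : ℝ} (hst : s ≤ t) :
    Tendsto (fun σ : ℝ => ∑ i ∈ Finset.Ico (tauIndex a (s + σ)) (tauIndex a (t + σ)), a i • γ i)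
      atTop (𝓝 0) := by
  have hp : Tendsto (fun σ : ℝ => tauIndex a (s + σ)) atTop atTop :=
    (tendsto_tauIndex_atTop hpos hdiv).comp (tendsto_atTop_add_const_left _ s tendsto_id)
  rw [NormedAddGroup.tendsto_nhds_zero]
  intro ε hε
  filter_upwards [hp.eventually (hγ (t - s + 1) (ε / 2) (half_pos hε)),
    (ha_lim.comp hp).eventually (eventually_le_nhds one_pos), eventually_ge_atTop (-s)]
    with σ hKC ha1 hσ
  have hs := tau_tauIndex_le_and_lt hpos hdiv (by linarith : 0 ≤ s + σ)
  have ht := tau_tauIndex_le_and_lt hpos hdiv (by linarith : 0 ≤ t + σ)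
  rw [tau_succ] at hs
  refine (hKC _ (tauIndex_mono hdiv (by linarith)) ?_).trans_lt (half_lt_self hε)
  simp only [Function.comp_apply] at ha1
  linarith

/-- Over `[s + σ, t + σ]` the drift sum is the integral of the step function
`u ↦ h (x (tauIndex a u))` up to two boundary cells of length at most `a _ → 0`. -/
theorem tendsto_sub_sub_integral_tauIndex_shift [CompleteSpace E] {x γ : ℕ → E} {h : E → E}
    {M : ℝ} (hpos : ∀ n, 0 < a n) (hdiv : Tendsto (tau a) atTop atTop)
    (ha_lim : Tendsto a atTop (𝓝 0)) (hM : ∀ n, ‖h (x n)‖ ≤ M) (hγ : KushnerClark a γ)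
    (hrec : ∀ n, x (n + 1) = x n + a n • h (x n) + a n • γ n) {s t : ℝ} (hst : s ≤ t) :
    Tendsto (fun σ : ℝ => x (tauIndex a (t + σ)) - x (tauIndex a (s + σ)) -
      ∫ u in s..t, h (x (tauIndex a (u + σ)))) atTop (𝓝 0) := by
  set g : ℝ → E := fun u => h (x (tauIndex a u))
  have hg : ∀ α β, IntervalIntegrable g volume α β := intervalIntegrable_comp_tauIndex hdiv hM
  have hM0 : 0 ≤ M := (norm_nonneg _).trans (hM 0)
  have hcell : ∀ r, 0 ≤ r → ‖∫ u in tau a (tauIndex a r)..r, g u‖ ≤ M * a (tauIndex a r) := by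
    intro r hr
    obtain ⟨h₁, h₂⟩ := tau_tauIndex_le_and_lt hpos hdiv hr
    rw [tau_succ] at h₂
    refine (intervalIntegral.norm_integral_le_of_norm_le_const fun u _ => hM _).trans ?_
    rw [abs_of_nonneg (sub_nonneg.2 h₁)]
    exact mul_le_mul_of_nonneg_left (by linarith) hM0
  have hresidual : ∀ σ, -s ≤ σ →
      x (tauIndex a (t + σ)) - x (tauIndex a (s + σ)) - ∫ u in s..t, g (u + σ) =
        (∫ u in tau a (tauIndex a (s + σ))..s + σ, g u) -
          (∫ u in tau a (tauIndex a (t + σ))..t + σ, g u) +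
          ∑ i ∈ Finset.Ico (tauIndex a (s + σ)) (tauIndex a (t + σ)), a i • γ i := by
    intro σ hσ
    have hpq : tauIndex a (s + σ) ≤ tauIndex a (t + σ) := tauIndex_mono hdiv (by linarith)
    rw [sub_eq_sum_Ico_of_eq_add (fun n => (hrec n).trans (add_assoc _ _ _)) hpq,
      Finset.sum_add_distrib, ← integral_comp_tauIndex hpos _ hpq,
      intervalIntegral.integral_comp_add_right g σ,
      ← intervalIntegral.integral_interval_sub_interval_comm (hg _ _) (hg _ _) (hg _ _)]
    abel
  have hp : ∀ r : ℝ, Tendsto (fun σ : ℝ => a (tauIndex a (r + σ))) atTop (𝓝 0) := fun r =>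
    ha_lim.comp ((tendsto_tauIndex_atTop hpos hdiv).comp
      (tendsto_atTop_add_const_left _ r tendsto_id))
  have hbound := (((hp s).const_mul M).add ((hp t).const_mul M)).add
    (tendsto_sum_Ico_tauIndex_shift hpos hdiv ha_lim hγ hst).norm
  rw [mul_zero, add_zero, norm_zero, add_zero] at hbound
  refine squeeze_zero_norm' ?_ hbound
  filter_upwards [eventually_ge_atTop (-s)] with σ hσ
  rw [hresidual σ hσ]
  exact (norm_add_le _ _).trans (add_le_add ((norm_sub_le _ _).trans
    (add_le_add (hcell (s + σ) (by linarith)) (hcell (t + σ) (by linarith)))) le_rfl)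

end Interpolation

section Limits

theorem cauchySeq_of_forall_eventually_dist_le {X : Type*} [PseudoMetricSpace X] {u : ℕ → X}
    (h : ∀ ε > 0, ∃ v : ℕ → X, CauchySeq v ∧ ∀ᶠ n in atTop, dist (u n) (v n) ≤ ε) :
    CauchySeq u := by
  rw [Metric.cauchySeq_iff]
  intro ε hε
  obtain ⟨v, hv, huv⟩ := h (ε / 3) (by positivity)
  obtain ⟨N₁, hN₁⟩ := Metric.cauchySeq_iff.1 hv (ε / 3) (by positivity)
  obtain ⟨N₂, hN₂⟩ := eventually_atTop.1 huv
  refine ⟨max N₁ N₂, fun m hm n hn => ?_⟩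
  have h₁ := hN₁ m (le_of_max_le_left hm) n (le_of_max_le_left hn)
  have h₂ := hN₂ m (le_of_max_le_right hm)
  have h₃ := hN₂ n (le_of_max_le_right hn)
  rw [dist_comm] at h₃
  linarith [dist_triangle4 (u m) (v m) (v n) (u n)]

/-- Pointwise compactness in the style of Arzelà–Ascoli: convergence is first forced at rational
times by compactness of `S ^ ℚ`, then spread to all times by the asymptotic Lipschitz bound. -/
theorem exists_subseq_tendsto_of_eventually_norm_sub_le {E : Type*} [NormedAddCommGroup E]
    {S : Set E} (hS : IsCompact S)
    {Y : ℕ → ℝ → E} (hYS : ∀ j t, Y j t ∈ S) {M : ℝ}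
    (hY : ∀ s t, s ≤ t → ∀ ε > 0, ∀ᶠ j in atTop, ‖Y j t - Y j s‖ ≤ M * (t - s) + ε) :
    ∃ φ : ℕ → ℕ, StrictMono φ ∧ ∃ w : ℝ → E,
      ∀ t, w t ∈ S ∧ Tendsto (fun j => Y (φ j) t) atTop (𝓝 (w t)) := by
  obtain ⟨f, -, φ, hφ, hf⟩ := (isCompact_univ_pi fun _ : ℚ => hS).tendsto_subseq
    (x := fun j (q : ℚ) => Y j q) fun j => mem_univ_pi.2 fun q => hYS j q
  have hcauchy : ∀ t, CauchySeq fun j => Y (φ j) t := fun t =>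
    cauchySeq_of_forall_eventually_dist_le fun ε hε => by
      obtain ⟨c, hc, hMc⟩ := exists_pos_mul_lt (half_pos hε) |M|
      obtain ⟨q, htq, hqt⟩ := exists_rat_btwn (lt_add_of_pos_right t hc)
      refine ⟨fun j => Y (φ j) q, (tendsto_pi_nhds.1 hf q).cauchySeq, ?_⟩
      filter_upwards [hφ.tendsto_atTop.eventually (hY t q htq.le (ε / 2) (half_pos hε))] with j hj
      rw [dist_eq_norm, norm_sub_rev]
      have hMq : M * (q - t) ≤ |M| * c :=
        (mul_le_mul_of_nonneg_right (le_abs_self M) (by linarith)).trans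
          (mul_le_mul_of_nonneg_left (by linarith) (abs_nonneg M))
      linarith
  choose w hwS hw using fun t => cauchySeq_tendsto_of_isComplete hS.isComplete
    (fun j => hYS (φ j) t) (hcauchy t)
  exact ⟨φ, hφ, w, fun t => ⟨hwS t, hw t⟩⟩

variable {E : Type*} [NormedAddCommGroup E] [NormedSpace ℝ E]

theorem sub_eq_integral_of_tendsto {S : Set E} {h : E → E} {M : ℝ} (hcont : ContinuousOn h S)
    (hM : ∀ y ∈ S, ‖h y‖ ≤ M) {Y : ℕ → ℝ → E} (hYS : ∀ j t, Y j t ∈ S)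
    (hmeas : ∀ j, AEStronglyMeasurable (fun u => h (Y j u)) volume) {w : ℝ → E}
    (hwS : ∀ t, w t ∈ S) (hw : ∀ t, Tendsto (fun j => Y j t) atTop (𝓝 (w t))) {s t : ℝ}
    (hres : Tendsto (fun j => Y j t - Y j s - ∫ u in s..t, h (Y j u)) atTop (𝓝 0)) :
    w t - w s = ∫ u in s..t, h (w u) := by
  have hint : Tendsto (fun j => ∫ u in s..t, h (Y j u)) atTop (𝓝 (∫ u in s..t, h (w u))) :=
    intervalIntegral.tendsto_integral_filter_of_dominated_convergence (fun _ => M)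
      (Eventually.of_forall fun j => (hmeas j).restrict)
      (Eventually.of_forall fun j => ae_of_all _ fun u _ => hM _ (hYS j u))
      intervalIntegrable_const
      (ae_of_all _ fun u _ => (hcont _ (hwS u)).tendsto.comp
        (tendsto_nhdsWithin_iff.2 ⟨hw u, Eventually.of_forall fun j => hYS j u⟩))
  refine tendsto_nhds_unique ((hw t).sub (hw s)) ?_
  simpa using hres.add hint

theorem lipschitzWith_of_sub_eq_integral {f w : ℝ → E} {M : ℝ} (hf : ∀ u, ‖f u‖ ≤ M)
    (hw : ∀ s t, s ≤ t → w t - w s = ∫ u in s..t, f u) : LipschitzWith M.toNNReal w := by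
  have hle : ∀ s t, s ≤ t → dist (w t) (w s) ≤ M * dist t s := fun s t hst => by
    rw [dist_eq_norm, hw s t hst, Real.dist_eq]
    exact intervalIntegral.norm_integral_le_of_norm_le_const fun u _ => hf u
  refine LipschitzWith.of_dist_le' fun s t => ?_
  rcases le_total s t with hst | hts
  · rw [dist_comm, dist_comm s]
    exact hle s t hst
  · exact hle t s hts

theorem hasDerivAt_of_sub_eq_integral [CompleteSpace E] {f w : ℝ → E} (hf : Continuous f)
    (hw : ∀ s t, s ≤ t → w t - w s = ∫ u in s..t, f u) (t : ℝ) : HasDerivAt w (f t) t := by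
  have hprim : w = fun t => w 0 + ∫ u in (0 : ℝ)..t, f u := by
    funext t
    rcases le_total 0 t with ht | ht
    · rw [← hw 0 t ht, add_sub_cancel]
    · rw [intervalIntegral.integral_symm, ← hw t 0 ht, neg_sub, add_sub_cancel]
  rw [hprim]
  exact (hf.integral_hasStrictDerivAt 0 t).hasDerivAt.const_add (w 0)

/-- Limits of asymptotic pseudotrajectories of `ẋ = h(x)` are solution curves. -/
theorem exists_subseq_tendsto_solution [CompleteSpace E] {S : Set E} {h : E → E} {M : ℝ}
    (hS : IsCompact S) (hcont : ContinuousOn h S) (hM : ∀ y ∈ S, ‖h y‖ ≤ M)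
    {Y : ℕ → ℝ → E} (hYS : ∀ j t, Y j t ∈ S)
    (hmeas : ∀ j, AEStronglyMeasurable (fun u => h (Y j u)) volume)
    (hres : ∀ s t, s ≤ t →
      Tendsto (fun j => Y j t - Y j s - ∫ u in s..t, h (Y j u)) atTop (𝓝 0)) :
    ∃ φ : ℕ → ℕ, ∃ w : ℝ → E, (∀ t, w t ∈ S) ∧ (∀ t, HasDerivAt w (h (w t)) t) ∧
      ∀ t, Tendsto (fun j => Y (φ j) t) atTop (𝓝 (w t)) := by
  have hY : ∀ s t, s ≤ t → ∀ ε > 0, ∀ᶠ j in atTop, ‖Y j t - Y j s‖ ≤ M * (t - s) + ε := by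
    intro s t hst ε hε
    filter_upwards [NormedAddGroup.tendsto_nhds_zero.1 (hres s t hst) ε hε] with j hj
    have hint : ‖∫ u in s..t, h (Y j u)‖ ≤ M * (t - s) := by
      have := intervalIntegral.norm_integral_le_of_norm_le_const (a := s) (b := t)
        fun u _ => hM _ (hYS j u)
      rwa [abs_of_nonneg (sub_nonneg.2 hst)] at this
    calc ‖Y j t - Y j s‖ = ‖(Y j t - Y j s - ∫ u in s..t, h (Y j u)) + ∫ u in s..t, h (Y j u)‖ := by
          rw [sub_add_cancel]
      _ ≤ ‖Y j t - Y j s - ∫ u in s..t, h (Y j u)‖ + ‖∫ u in s..t, h (Y j u)‖ := norm_add_le _ _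
      _ ≤ M * (t - s) + ε := by linarith
  obtain ⟨φ, hφ, w, hw⟩ := exists_subseq_tendsto_of_eventually_norm_sub_le hS hYS hY
  have hint : ∀ s t, s ≤ t → w t - w s = ∫ u in s..t, h (w u) := fun s t hst =>
    sub_eq_integral_of_tendsto hcont hM (fun j => hYS (φ j)) (fun j => hmeas (φ j))
      (fun t => (hw t).1) (fun t => (hw t).2) ((hres s t hst).comp hφ.tendsto_atTop)
  have hwc : Continuous w :=
    (lipschitzWith_of_sub_eq_integral (fun u => hM _ (hw u).1) hint).continuous
  exact ⟨φ, w, fun t => (hw t).1,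
    hasDerivAt_of_sub_eq_integral (hcont.comp_continuous hwc fun t => (hw t).1) hint,
    fun t => (hw t).2⟩

end Limits

end StochasticApproximation

open StochasticApproximation

theorem stochastic_approximation_general
    {K : ℕ} (S : Set (Fin K → ℝ)) (hScomp : IsCompact S)
    (x : ℕ → Fin K → ℝ) (hxS : ∀ n, x n ∈ S)
    (a : ℕ → ℝ) (ha_pos : ∀ n, 0 < a n) (ha_anti : ∀ n, a (n+1) ≤ a n)
    -- `0 < liminf n a_n ≤ limsup n a_n < ∞`
    (ha_bounds : ∃ b B : ℝ, 0 < b ∧ ∀ᶠ n : ℕ in atTop, b ≤ (n : ℝ) * a n ∧ (n : ℝ) * a n ≤ B)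
    (γ : ℕ → Fin K → ℝ)
    (hγ : Tendsto (fun n : ℕ => (n : ℝ)⁻¹ • ∑ i ∈ Finset.Icc 1 n, γ i) atTop (𝓝 0))
    (h : (Fin K → ℝ) → Fin K → ℝ) (hcont : ContinuousOn h S)
    (hrec : ∀ n : ℕ, x (n+1) = x n + a n • h (x n) + a n • γ n)
    (z : ℝ → Fin K → ℝ)
    (huniq : ∀ w : ℝ → Fin K → ℝ,
      ((∀ t, w t ∈ S) ∧ ∀ t : ℝ, HasDerivAt w (h (w t)) t) → w = z) :
    Tendsto x atTop (𝓝 (z 0)) := by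
  obtain ⟨b, B, hb, hbB⟩ := ha_bounds
  have ha0 : ∀ n, 0 ≤ a n := fun n => (ha_pos n).le
  have hdiv : Tendsto (tau a) atTop atTop := tendsto_tau_atTop hb ha0 (hbB.mono fun _ hn => hn.1)
  have ha_lim : Tendsto a atTop (𝓝 0) :=
    tendsto_zero_of_natCast_mul_le ha0 (hbB.mono fun _ hn => hn.2)
  have hKC : KushnerClark a γ := kushnerClark_of_isLittleO (antitone_nat_of_succ_le ha_anti) ha0
    (hbB.mono fun _ hn => hn.2) (isLittleO_sum_range_of_tendsto_cesaro hγ)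
  obtain ⟨M, hM⟩ := hScomp.exists_bound_of_continuousOn hcont
  refine tendsto_of_subseq_tendsto fun ns hns => ?_
  obtain ⟨φ, w, hwS, hw_sol, hw_lim⟩ := exists_subseq_tendsto_solution hScomp hcont hM
    (Y := fun j u => x (tauIndex a (u + tau a (ns j)))) (fun _ _ => hxS _)
    (fun _ => ((stronglyMeasurable_comp_tauIndex hdiv fun n => h (x n)).comp_measurable
      (measurable_add_const _)).aestronglyMeasurable)
    (fun s t hst => (tendsto_sub_sub_integral_tauIndex_shift ha_pos hdiv ha_lim
      (fun n => hM _ (hxS n)) hKC hrec hst).comp (hdiv.comp hns))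
  refine ⟨φ, ?_⟩
  simpa [huniq w ⟨hwS, hw_sol⟩, tauIndex_tau ha_pos] using hw_lim 0

/-- **Theorem (Stochastic approximation).**
Let `(x_n)` take values in a compact convex `S ⊆ ℝ^K`, let `(a_n)` be nonincreasing positive
step sizes with `0 < liminf n·a_n ≤ limsup n·a_n < ∞`, and let the errors `(γ_n)` be Cesaro
negligible.  Let `h : S → ℝ^K` be continuous with `x_{n+1} = x_n + a_n h(x_n) + a_n γ_n`.
If the ODE `ẋ = h(x)` has a unique solution `z : ℝ → S`, then `x_n → z 0`. -/
theorem stochastic_approximation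
    {K : ℕ} (S : Set (Fin K → ℝ)) (hScomp : IsCompact S) (hSconv : Convex ℝ S)
    (x : ℕ → Fin K → ℝ) (hxS : ∀ n, x n ∈ S)
    (a : ℕ → ℝ) (ha_pos : ∀ n, 0 < a n) (ha_anti : ∀ n, a (n+1) ≤ a n)
    -- `0 < liminf n a_n ≤ limsup n a_n < ∞`
    (ha_bounds : ∃ b B : ℝ, 0 < b ∧ ∀ᶠ n : ℕ in atTop, b ≤ (n : ℝ) * a n ∧ (n : ℝ) * a n ≤ B)
    (γ : ℕ → Fin K → ℝ)
    (hγ : Tendsto (fun n : ℕ => (n : ℝ)⁻¹ • ∑ i ∈ Finset.Icc 1 n, γ i) atTop (𝓝 0))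
    (h : (Fin K → ℝ) → Fin K → ℝ) (hcont : ContinuousOn h S)
    (hrec : ∀ n : ℕ, x (n+1) = x n + a n • h (x n) + a n • γ n)
    (z : ℝ → Fin K → ℝ)
    (hz : (∀ t, z t ∈ S) ∧ ∀ t : ℝ, HasDerivAt z (h (z t)) t)
    (huniq : ∀ w : ℝ → Fin K → ℝ,
      ((∀ t, w t ∈ S) ∧ ∀ t : ℝ, HasDerivAt w (h (w t)) t) → w = z) :
    Tendsto x atTop (𝓝 (z 0)) :=
  stochastic_approximation_general S hScomp x hxS a ha_pos ha_anti ha_bounds γ hγ h hcont hrec z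
    huniq
end

section
/- Let (a_n)_{n≥0} be a nonincreasing sequence of positive reals with liminf n·a_n > 0 and a_n → 0. For T > 0 define τ(n,T) = inf{k ≥ n : a_n + a_{n+1} + ··· + a_k ≥ T}. If a* > 0 satisfies n·a_n > a* for all sufficiently large n, then τ(n,T)/n ≤ exp(T/a* + 1) for all sufficiently large n; in particular, for each T > 0, sup_n τ(n,T)/n < ∞. -/
/-!
Since `m · a_m > a*` for large `m` and `log (m + 1) - log m ≤ 1 / m`, the partial sums
`a_n + ⋯ + a_k` dominate the telescoping sum `a* (log (k + 1) - log n)`. For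
`k = ⌊n e^{T/a*}⌋` this exceeds `T`, so `τ(n, T) ≤ n e^{T/a*}`.
-/

open Filter Finset Real
open scoped Topology

lemma Real.log_add_one_sub_log_le_inv {x : ℝ} (hx : 0 < x) : log (x + 1) - log x ≤ x⁻¹ := by
  rw [← log_div (by positivity) hx.ne']
  calc log ((x + 1) / x) ≤ (x + 1) / x - 1 := log_le_sub_one_of_pos (by positivity)
    _ = x⁻¹ := by field_simp; ring

lemma mul_log_sub_log_le_sum_Icc {a : ℕ → ℝ} {c : ℝ} {n k : ℕ} (hc : 0 ≤ c) (hn : 0 < n)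
    (hnk : n ≤ k) (h : ∀ m, n ≤ m → c ≤ m * a m) :
    c * (log (k + 1) - log n) ≤ ∑ m ∈ Icc n k, a m := by
  have htelescope : ∑ m ∈ Icc n k, (log ((m + 1 : ℕ) : ℝ) - log m) = log (k + 1) - log n := by
    rw [sum_Icc_sub hnk (fun m : ℕ => log m)]
    push_cast
    rfl
  rw [← htelescope, mul_sum]
  refine sum_le_sum fun m hm => ?_
  have hnm : n ≤ m := (mem_Icc.mp hm).1
  have hm_pos : (0 : ℝ) < m := by exact_mod_cast hn.trans_le hnm
  calc c * (log ((m + 1 : ℕ) : ℝ) - log m) ≤ c * (m : ℝ)⁻¹ := by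
        push_cast
        exact mul_le_mul_of_nonneg_left (log_add_one_sub_log_le_inv hm_pos) hc
    _ ≤ a m := by
        rw [← div_eq_mul_inv, div_le_iff₀ hm_pos, mul_comm]
        exact h m hnm

lemma le_sum_Icc_floor_mul_exp {a : ℕ → ℝ} {c T : ℝ} {n : ℕ} (hc : 0 < c) (hT : 0 ≤ T)
    (hn : 0 < n) (h : ∀ m, n ≤ m → c ≤ m * a m) :
    n ≤ ⌊n * exp (T / c)⌋₊ ∧ T ≤ ∑ m ∈ Icc n ⌊n * exp (T / c)⌋₊, a m := by
  set k := ⌊n * exp (T / c)⌋₊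
  have hn_real : (0 : ℝ) < n := by exact_mod_cast hn
  have hnk : n ≤ k := Nat.le_floor <| le_mul_of_one_le_right hn_real.le <| one_le_exp (by positivity)
  refine ⟨hnk, ?_⟩
  have hlog : T / c ≤ log (k + 1) - log n := by
    have hk : n * exp (T / c) ≤ k + 1 := (Nat.lt_floor_add_one _).le
    have := log_le_log (by positivity) hk
    rw [log_mul hn_real.ne' (exp_ne_zero _), log_exp] at this
    linarith
  calc T = c * (T / c) := by field_simp
    _ ≤ c * (log (k + 1) - log n) := mul_le_mul_of_nonneg_left hlog hc.le
    _ ≤ _ := mul_log_sub_log_le_sum_Icc hc.le hn hnk h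

theorem tau_linear_growth_general
    (a : ℕ → ℝ)
    (astar : ℝ) (hastar : 0 < astar)
    (h_liminf : ∀ᶠ n : ℕ in atTop, astar < (n : ℝ) * a n)
    (τ : ℕ → ℝ → ℕ)
    (hτ : ∀ n T, τ n T = sInf {k : ℕ | n ≤ k ∧ T ≤ ∑ m ∈ Finset.Icc n k, a m}) :
    (∀ T : ℝ, 0 < T →
      ∀ᶠ n : ℕ in atTop, (τ n T : ℝ) / n ≤ Real.exp (T / astar + 1)) ∧
    (∀ T : ℝ, 0 < T → BddAbove (Set.range fun n : ℕ => (τ n T : ℝ) / n)) := by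
  have hbound : ∀ T : ℝ, 0 < T →
      ∀ᶠ n : ℕ in atTop, (τ n T : ℝ) / n ≤ Real.exp (T / astar + 1) := by
    intro T hT
    obtain ⟨N, hN⟩ := eventually_atTop.mp h_liminf
    filter_upwards [eventually_ge_atTop (max N 1)] with n hn
    have hn_pos : 0 < n := by omega
    have hτ_le : τ n T ≤ ⌊n * exp (T / astar)⌋₊ := by
      rw [hτ]
      exact Nat.sInf_le <| le_sum_Icc_floor_mul_exp hastar hT.le hn_pos
        fun m hm => (hN m (by omega)).le
    calc (τ n T : ℝ) / n ≤ ⌊n * exp (T / astar)⌋₊ / n := by gcongr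
      _ ≤ n * exp (T / astar) / n := by gcongr; exact Nat.floor_le (by positivity)
      _ = exp (T / astar) := by field_simp
      _ ≤ exp (T / astar + 1) := exp_le_exp.mpr (by linarith)
  exact ⟨hbound, fun T hT => (isBoundedUnder_of_eventually_le (hbound T hT)).bddAbove_range⟩

/-- **Lemma (growth of the stopping index `τ(n,T)`).**
For a nonincreasing positive sequence `(a_n)` with `a_n → 0` and `n·a_n > a* > 0`
eventually, the index `τ(n,T) = inf {k ≥ n : a_n + ⋯ + a_k ≥ T}` satisfies
`τ(n,T)/n ≤ exp(T/a* + 1)` for all large `n`; in particular `sup_n τ(n,T)/n < ∞`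
for every `T > 0`. -/
theorem tau_linear_growth
    (a : ℕ → ℝ) (ha_pos : ∀ n, 0 < a n) (ha_anti : ∀ n, a (n+1) ≤ a n)
    (ha_lim : Tendsto a atTop (𝓝 0))
    (astar : ℝ) (hastar : 0 < astar)
    (h_liminf : ∀ᶠ n : ℕ in atTop, astar < (n : ℝ) * a n)
    (τ : ℕ → ℝ → ℕ)
    (hτ : ∀ n T, τ n T = sInf {k : ℕ | n ≤ k ∧ T ≤ ∑ m ∈ Finset.Icc n k, a m}) :
    (∀ T : ℝ, 0 < T →
      ∀ᶠ n : ℕ in atTop, (τ n T : ℝ) / n ≤ Real.exp (T / astar + 1)) ∧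
    (∀ T : ℝ, 0 < T → BddAbove (Set.range fun n : ℕ => (τ n T : ℝ) / n)) :=
  tau_linear_growth_general a astar hastar h_liminf τ hτ
end

section
/- Let (a_n)_{n≥0} be a nonincreasing sequence of positive reals, (γ_n) a sequence in ℝ^K, and Γ_n = Σ_{i=1}^n γ_i. Then for all n ≥ 1 and all j ≥ n, ‖Σ_{k=n}^j a_k γ_k‖₁ ≤ ‖a_j Γ_j‖₁ + ‖a_{n−1} Γ_{n−1}‖₁ + (sup_{k≥n−1} ‖a_k Γ_k‖₁)·(a_n/a_j). -/
/-! Abel summation with `γ (k+1) = Γ (k+1) - Γ k` gives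
`∑ a (k+1) • γ (k+1) = a j • Γ j - a m • Γ m + ∑ (a k - a (k+1)) • Γ k`. With `M` bounding
`‖a k • Γ k‖`, the `k`-th remainder term has norm `(1 - a (k+1) / a k) ‖a k • Γ k‖`, which is at most
`M a (m+1) (1 / a (k+1) - 1 / a k)` because `a (k+1) ≤ a (m+1)`; these telescope to at most
`M a (m+1) / a j`. -/

noncomputable section

/-- The `ℓ¹` norm on `ℝ^K`. -/
def l1norm {K : ℕ} (v : Fin K → ℝ) : ℝ := ∑ i, |v i|

lemma l1norm_eq_norm_toLp {K : ℕ} (v : Fin K → ℝ) : l1norm v = ‖WithLp.toLp 1 v‖ := by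
  simp [l1norm, PiLp.norm_eq_of_L1]

open Finset

section AbelSummation

variable {E : Type*} [SeminormedAddCommGroup E] [NormedSpace ℝ E]

lemma sum_Ico_smul_sub_eq {R M : Type*} [CommRing R] [AddCommGroup M] [Module R M]
    (a : ℕ → R) (Γ : ℕ → M) {m j : ℕ} (hmj : m ≤ j) :
    ∑ k ∈ Ico m j, a (k + 1) • (Γ (k + 1) - Γ k) =
      (a j • Γ j - a m • Γ m) + ∑ k ∈ Ico m j, (a k - a (k + 1)) • Γ k := by
  rw [← sum_Ico_sub (fun k => a k • Γ k) hmj, ← sum_add_distrib]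
  refine sum_congr rfl fun k _ => ?_
  module

lemma norm_sub_smul_le {a b c M : ℝ} (x : E) (hb : 0 < b) (hba : b ≤ a) (hbc : b ≤ c)
    (hM : ‖a • x‖ ≤ M) : ‖(a - b) • x‖ ≤ M * c * (1 / b - 1 / a) := by
  have ha : 0 < a := hb.trans_le hba
  have hM₀ : 0 ≤ M := (norm_nonneg _).trans hM
  rw [norm_smul, Real.norm_of_nonneg (sub_nonneg.2 hba)]
  rw [norm_smul, Real.norm_of_nonneg ha.le] at hM
  have hx : ‖x‖ ≤ M / a := (le_div_iff₀' ha).2 hM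
  have hc : 0 ≤ 1 / b - 1 / a := sub_nonneg.2 (one_div_le_one_div_of_le hb hba)
  calc (a - b) * ‖x‖ ≤ (a - b) * (M / a) := mul_le_mul_of_nonneg_left hx (sub_nonneg.2 hba)
    _ = M * b * (1 / b - 1 / a) := by field_simp
    _ ≤ M * c * (1 / b - 1 / a) := by gcongr

lemma norm_sum_Ico_sub_smul_le {a : ℕ → ℝ} (ha_pos : ∀ k, 0 < a k) (ha : Antitone a)
    (Γ : ℕ → E) {m j : ℕ} (hmj : m ≤ j) {M : ℝ} (hM : ∀ k ∈ Ico m j, ‖a k • Γ k‖ ≤ M) :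
    ‖∑ k ∈ Ico m j, (a k - a (k + 1)) • Γ k‖ ≤ M * a (m + 1) * (1 / a j - 1 / a m) := by
  calc ‖∑ k ∈ Ico m j, (a k - a (k + 1)) • Γ k‖
      ≤ ∑ k ∈ Ico m j, ‖(a k - a (k + 1)) • Γ k‖ := norm_sum_le _ _
    _ ≤ ∑ k ∈ Ico m j, M * a (m + 1) * (1 / a (k + 1) - 1 / a k) := by
      refine sum_le_sum fun k hk => norm_sub_smul_le _ (ha_pos _) (ha k.le_succ) ?_ (hM k hk)
      exact ha (Nat.succ_le_succ (mem_Ico.1 hk).1)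
    _ = M * a (m + 1) * (1 / a j - 1 / a m) := by
      rw [← mul_sum, sum_Ico_sub (fun k => 1 / a k) hmj]

theorem norm_sum_Ico_smul_sub_le {a : ℕ → ℝ} (ha_pos : ∀ k, 0 < a k) (ha : Antitone a)
    (Γ : ℕ → E) {m j : ℕ} (hmj : m ≤ j) {M : ℝ} (hM : ∀ k ∈ Icc m j, ‖a k • Γ k‖ ≤ M) :
    ‖∑ k ∈ Ico m j, a (k + 1) • (Γ (k + 1) - Γ k)‖ ≤
      ‖a j • Γ j‖ + ‖a m • Γ m‖ + M * (a (m + 1) / a j) := by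
  have hM₀ : 0 ≤ M := (norm_nonneg _).trans (hM m (left_mem_Icc.2 hmj))
  have hrem := norm_sum_Ico_sub_smul_le ha_pos ha Γ hmj fun k hk => hM k (Ico_subset_Icc_self hk)
  have hdrop : M * a (m + 1) * (1 / a j - 1 / a m) ≤ M * (a (m + 1) / a j) := by
    have ham := ha_pos m
    have ham' := ha_pos (m + 1)
    calc M * a (m + 1) * (1 / a j - 1 / a m) ≤ M * a (m + 1) * (1 / a j) := by
          gcongr
          exact sub_le_self _ (by positivity)
      _ = M * (a (m + 1) / a j) := by ring
  rw [sum_Ico_smul_sub_eq a Γ hmj]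
  calc _ ≤ ‖a j • Γ j - a m • Γ m‖ + ‖∑ k ∈ Ico m j, (a k - a (k + 1)) • Γ k‖ := norm_add_le _ _
    _ ≤ _ := by linarith [norm_sub_le (a j • Γ j) (a m • Γ m)]

end AbelSummation

/-- **Lemma (Abel summation bound).**
For a nonincreasing positive sequence `(a_n)`, a sequence `(γ_n)` in `ℝ^K` and
`Γ_n = Σ_{i=1}^n γ_i`, for all `n ≥ 1` and `j ≥ n`,
`‖Σ_{k=n}^j a_k γ_k‖₁ ≤ ‖a_j Γ_j‖₁ + ‖a_{n−1} Γ_{n−1}‖₁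
   + (sup_{k ≥ n−1} ‖a_k Γ_k‖₁) · (a_n / a_j)`. -/
theorem abel_summation_bound
    {K : ℕ} (a : ℕ → ℝ) (ha_pos : ∀ n, 0 < a n) (ha_anti : ∀ n, a (n+1) ≤ a n)
    (γ : ℕ → Fin K → ℝ) (Γ : ℕ → Fin K → ℝ)
    (hΓ : ∀ n, Γ n = ∑ i ∈ Finset.Icc 1 n, γ i) :
    ∀ n, 1 ≤ n → ∀ j, n ≤ j →
      ENNReal.ofReal (l1norm (∑ k ∈ Finset.Icc n j, a k • γ k)) ≤
        ENNReal.ofReal (l1norm (a j • Γ j)) +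
        ENNReal.ofReal (l1norm (a (n-1) • Γ (n-1))) +
        (⨆ k ∈ {k : ℕ | n - 1 ≤ k}, ENNReal.ofReal (l1norm (a k • Γ k))) *
          ENNReal.ofReal (a n / a j) := by
  intro n hn j hnj
  obtain ⟨m, rfl⟩ := Nat.exists_eq_add_of_le' hn
  rw [Nat.add_sub_cancel]
  have hγ : ∀ k, γ (k + 1) = Γ (k + 1) - Γ k := fun k => by
    rw [hΓ, hΓ, sum_Icc_succ_top (by omega), add_sub_cancel_left]
  have hsum : ∑ k ∈ Icc (m + 1) j, a k • γ k = ∑ k ∈ Ico m j, a (k + 1) • (Γ (k + 1) - Γ k) := by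
    simp only [← hγ, sum_Ico_add' (fun k => a k • γ k), Ico_add_one_right_eq_Icc]
  rw [hsum]
  simp only [l1norm_eq_norm_toLp, WithLp.toLp_sum, WithLp.toLp_smul, WithLp.toLp_sub]
  obtain ⟨k₀, hk₀, hmax⟩ := (Icc m j).exists_max_image (fun k => ‖a k • WithLp.toLp 1 (Γ k)‖)
    ⟨m, left_mem_Icc.2 (by omega)⟩
  have key := norm_sum_Ico_smul_sub_le ha_pos (antitone_nat_of_succ_le ha_anti)
    (fun k => WithLp.toLp 1 (Γ k)) (show m ≤ j by omega) hmax
  calc _ ≤ ENNReal.ofReal (‖a j • WithLp.toLp 1 (Γ j)‖ + ‖a m • WithLp.toLp 1 (Γ m)‖ +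
          ‖a k₀ • WithLp.toLp 1 (Γ k₀)‖ * (a (m + 1) / a j)) := ENNReal.ofReal_le_ofReal key
    _ = _ := by
      have ham := ha_pos (m + 1)
      have haj := ha_pos j
      rw [ENNReal.ofReal_add (by positivity) (by positivity),
        ENNReal.ofReal_add (by positivity) (by positivity), ENNReal.ofReal_mul (by positivity)]
    _ ≤ _ := by
      gcongr
      exact le_iSup₂_of_le k₀ (mem_Icc.1 hk₀).1 le_rfl

end
end

section
/- Consider an urn model with K colors satisfying Assumptions 1 and 2. Let (X_n) be a sequence of random variables adapted to (F_n) such that |X_n| ≤ c′·‖R_n‖ for some constant c′ ∈ (0,∞). Then, with probability 1, (1/n) Σ_{k=1}^n ( X_k − E[X_k 1{‖R_k‖ ≤ k} | F_{k−1}] ) → 0. -/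
/-!
Truncate at level `k`: `Y_k = X_k 1{‖R_k‖ ≤ k}`. Under either form of Assumption 2 the series
`Σ_k P(‖R_k‖ > k)` converges, so by Borel–Cantelli `X_k = Y_k` for all large `k` almost surely, and
the Cesàro means of `X_k - Y_k` vanish. The centred truncations `D_k = Y_k - E[Y_k | F_{k-1}]` are
martingale differences with `E[D_k²] ≤ E[Y_k²] ≤ c'² E[‖R_k‖² 1{‖R_k‖ ≤ k}]`, and this second-moment
series weighted by `k⁻²` converges as well: under (a) by the layer-cake formula together with
`Σ_{k > t} k⁻² ≤ 2 / t`, under (b) because `x² ≤ (k / φ k) · x φ(x)` for `x₀ ≤ x ≤ k`. Hence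
`Σ_k D_k / k` is an L²-bounded martingale, it converges almost surely, and Kronecker's lemma gives
`(1/n) Σ_{k ≤ n} D_k → 0`.
-/

open MeasureTheory Filter
open scoped Topology ENNReal

noncomputable section

def matNorm {K : ℕ} (A : Fin K → Fin K → ℝ) : ℝ := ⨆ i, ∑ j, |A i j|

def MatIrreducible {K : ℕ} (A : Fin K → Fin K → ℝ) : Prop :=
  ∀ i j, ∃ N : ℕ, 1 ≤ N ∧ 0 < (Matrix.of A ^ N) i j

theorem matNorm_nonneg {K : ℕ} (A : Fin K → Fin K → ℝ) : 0 ≤ matNorm A :=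
  Real.iSup_nonneg fun _ => Finset.sum_nonneg fun _ _ => abs_nonneg _

theorem Measurable.matNorm {Ω : Type*} {m : MeasurableSpace Ω} {K : ℕ}
    {f : Ω → Fin K → Fin K → ℝ} (hf : Measurable f) : Measurable fun ω => _root_.matNorm (f ω) :=
  Measurable.iSup fun _ => Finset.measurable_sum _ fun _ _ => hf.eval.eval.abs

def truncateAt (x a : ℝ) : ℝ := if x ≤ a then x else 0

theorem truncateAt_mem_Icc {x a : ℝ} (hx : 0 ≤ x) (ha : 0 ≤ a) : truncateAt x a ∈ Set.Icc 0 a := by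
  unfold truncateAt
  split_ifs with h
  exacts [⟨hx, h⟩, ⟨le_rfl, ha⟩]

theorem lt_and_le_of_lt_truncateAt {t x a : ℝ} (ht : 0 ≤ t) (h : t < truncateAt x a) :
    t < x ∧ x ≤ a := by
  unfold truncateAt at h
  split_ifs at h with hxa
  exacts [⟨h, hxa⟩, absurd h (not_lt.2 ht)]

theorem measure_lt_truncateAt_le {Ω : Type*} {m : MeasurableSpace Ω} (μ : Measure Ω)
    (f : Ω → ℝ) {t : ℝ} (ht : 0 ≤ t) (a : ℝ) :
    μ {ω | t < truncateAt (f ω) a} ≤ if t < a then μ {ω | t < f ω} else 0 := by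
  split_ifs with hta
  · exact measure_mono fun ω hω => (lt_and_le_of_lt_truncateAt ht hω).1
  · refine le_of_eq (measure_eq_zero_iff_ae_notMem.2 (ae_of_all _ fun ω hω => hta ?_))
    obtain ⟨htf, hfa⟩ := lt_and_le_of_lt_truncateAt ht hω
    exact htf.trans_le hfa

theorem Measurable.truncateAt {Ω : Type*} {m : MeasurableSpace Ω} {f : Ω → ℝ} (hf : Measurable f)
    (a : ℝ) : Measurable fun ω => _root_.truncateAt (f ω) a :=
  Measurable.ite (measurableSet_le hf measurable_const) hf measurable_const

namespace Finset

theorem sum_Icc_one_eq_sum_range {M : Type*} [AddCommMonoid M] (f : ℕ → M) (n : ℕ) :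
    ∑ k ∈ Icc 1 n, f k = ∑ k ∈ range n, f (k + 1) := by
  induction n with
  | zero => simp
  | succ n ih => rw [sum_Icc_succ_top (by omega), ih, sum_range_succ]

theorem sum_Icc_eq_mul_sub_sum_range (a : ℕ → ℝ) (n : ℕ) :
    ∑ k ∈ Icc 1 n, a k
      = n * ∑ k ∈ Icc 1 n, a k / k - ∑ j ∈ range n, ∑ k ∈ Icc 1 j, a k / k := by
  induction n with
  | zero => simp
  | succ n ih =>
    rw [sum_Icc_succ_top (by omega), sum_Icc_succ_top (by omega), sum_range_succ, ih]
    push_cast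
    field_simp
    ring

end Finset

theorem Filter.Tendsto.cesaro_Icc {u : ℕ → ℝ} {l : ℝ} (h : Tendsto u atTop (𝓝 l)) :
    Tendsto (fun n : ℕ => (n : ℝ)⁻¹ * ∑ k ∈ Finset.Icc 1 n, u k) atTop (𝓝 l) := by
  simpa only [Finset.sum_Icc_one_eq_sum_range, Function.comp_def] using
    (h.comp (tendsto_add_atTop_nat 1)).cesaro

theorem tendsto_inv_mul_sum_of_tendsto_sum_div {a : ℕ → ℝ} {l : ℝ}
    (h : Tendsto (fun n : ℕ => ∑ k ∈ Finset.Icc 1 n, a k / k) atTop (𝓝 l)) :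
    Tendsto (fun n : ℕ => (n : ℝ)⁻¹ * ∑ k ∈ Finset.Icc 1 n, a k) atTop (𝓝 0) := by
  have := h.sub h.cesaro
  rw [sub_self] at this
  refine this.congr' ?_
  filter_upwards [eventually_ne_atTop 0] with n hn
  rw [Finset.sum_Icc_eq_mul_sub_sum_range a, mul_sub, ← mul_assoc,
    inv_mul_cancel₀ (Nat.cast_ne_zero.2 hn), one_mul]

section MartingaleDifference

variable {Ω : Type*} {m0 : MeasurableSpace Ω} {μ : Measure Ω}

theorem integral_mul_eq_zero_of_condExp_eq_zero {m : MeasurableSpace Ω} (hm : m ≤ m0)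
    [SigmaFinite (μ.trim hm)] {f g : Ω → ℝ} (hg : StronglyMeasurable[m] g)
    (hgf : Integrable (g * f) μ) (hf : Integrable f μ) (hcond : μ[f | m] =ᵐ[μ] 0) :
    ∫ ω, g ω * f ω ∂μ = 0 := calc
  ∫ ω, g ω * f ω ∂μ = ∫ ω, (μ[g * f | m]) ω ∂μ := (integral_condExp hm).symm
  _ = ∫ ω, (g * μ[f | m]) ω ∂μ :=
    integral_congr_ae (condExp_mul_of_stronglyMeasurable_left hg hgf hf)
  _ = 0 := integral_eq_zero_of_ae <| by
    filter_upwards [hcond] with ω hω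
    simp [hω]

theorem integral_sq_sub_condExp_le [IsFiniteMeasure μ] {m : MeasurableSpace Ω} (hm : m ≤ m0)
    {X : Ω → ℝ} (hX : MemLp X 2 μ) :
    ∫ ω, (X ω - μ[X | m] ω) ^ 2 ∂μ ≤ ∫ ω, X ω ^ 2 ∂μ := calc
  ∫ ω, (X ω - μ[X | m] ω) ^ 2 ∂μ = ∫ ω, ProbabilityTheory.condVar m X μ ω ∂μ :=
    (integral_condExp hm).symm
  _ ≤ ∫ ω, μ[X ^ 2 | m] ω ∂μ := integral_mono_ae integrable_condExp integrable_condExp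
    (ProbabilityTheory.condVar_ae_le_condExp_sq hm hX)
  _ = ∫ ω, X ω ^ 2 ∂μ := integral_condExp hm

theorem integral_abs_le_one_add_integral_sq_div_two [IsProbabilityMeasure μ] {f : Ω → ℝ}
    (hf : MemLp f 2 μ) : ∫ ω, |f ω| ∂μ ≤ (1 + ∫ ω, f ω ^ 2 ∂μ) / 2 := calc
  ∫ ω, |f ω| ∂μ ≤ ∫ ω, (1 + f ω ^ 2) / 2 ∂μ :=
    integral_mono (hf.integrable one_le_two).abs
      (((integrable_const 1).add hf.integrable_sq).div_const 2) fun ω => by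
        nlinarith [sq_nonneg (|f ω| - 1), sq_abs (f ω)]
  _ = (1 + ∫ ω, f ω ^ 2 ∂μ) / 2 := by
    rw [integral_div, integral_add (integrable_const 1) hf.integrable_sq]
    simp

variable {F : Filtration ℕ m0}

theorem MeasureTheory.Martingale.exists_ae_tendsto_of_integral_sq_le [IsProbabilityMeasure μ]
    {f : ℕ → Ω → ℝ} (hf : Martingale f F μ) (hL2 : ∀ n, MemLp (f n) 2 μ) {B : ℝ}
    (hB : ∀ n, ∫ ω, f n ω ^ 2 ∂μ ≤ B) :
    ∀ᵐ ω ∂μ, ∃ c, Tendsto (fun n => f n ω) atTop (𝓝 c) := by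
  refine hf.submartingale.exists_ae_tendsto_of_bdd (R := ((1 + B) / 2).toNNReal) fun n => ?_
  rw [eLpNorm_one_eq_lintegral_enorm, ← ofReal_integral_norm_eq_lintegral_enorm
    ((hL2 n).integrable one_le_two), ENNReal.ofReal_coe_nnreal.symm]
  exact ENNReal.ofReal_le_ofReal <| ((integral_abs_le_one_add_integral_sq_div_two (hL2 n)).trans
    (by linarith [hB n])).trans (Real.le_coe_toNNReal _)

variable {D : ℕ → Ω → ℝ}

theorem martingale_sum_Icc_of_condExp_eq_zero [IsFiniteMeasure μ]
    (hD : ∀ k, StronglyMeasurable[F k] (D k)) (hint : ∀ k, 1 ≤ k → Integrable (D k) μ)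
    (hcond : ∀ k, 1 ≤ k → μ[D k | F (k - 1)] =ᵐ[μ] 0) :
    Martingale (fun n ω => ∑ k ∈ Finset.Icc 1 n, D k ω) F μ := by
  refine martingale_of_condExp_sub_eq_zero_nat
    (fun n => Finset.stronglyMeasurable_fun_sum _ fun k hk =>
      (hD k).mono (F.mono (Finset.mem_Icc.1 hk).2))
    (fun n => integrable_finsetSum _ fun k hk => hint k (Finset.mem_Icc.1 hk).1) fun n => ?_
  have hinc : (fun ω => ∑ k ∈ Finset.Icc 1 (n + 1), D k ω)
      - (fun ω => ∑ k ∈ Finset.Icc 1 n, D k ω) = D (n + 1) := by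
    ext ω
    simp [Finset.sum_Icc_succ_top (show 1 ≤ n + 1 by omega)]
  rw [hinc]
  simpa using hcond (n + 1) (by omega)

theorem integral_sq_sum_Icc_of_condExp_eq_zero [IsFiniteMeasure μ]
    (hD : ∀ k, StronglyMeasurable[F k] (D k)) (hL2 : ∀ k, 1 ≤ k → MemLp (D k) 2 μ)
    (hcond : ∀ k, 1 ≤ k → μ[D k | F (k - 1)] =ᵐ[μ] 0) (n : ℕ) :
    ∫ ω, (∑ k ∈ Finset.Icc 1 n, D k ω) ^ 2 ∂μ = ∑ k ∈ Finset.Icc 1 n, ∫ ω, D k ω ^ 2 ∂μ := by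
  induction n with
  | zero => simp
  | succ n ih =>
    set M := fun ω => ∑ k ∈ Finset.Icc 1 n, D k ω
    have hM_meas : StronglyMeasurable[F n] M := Finset.stronglyMeasurable_fun_sum _ fun k hk =>
      (hD k).mono (F.mono (Finset.mem_Icc.1 hk).2)
    have hM : MemLp M 2 μ := memLp_finsetSum _ fun k hk => hL2 k (Finset.mem_Icc.1 hk).1
    have hD' := hL2 (n + 1) (by omega)
    have hcross : ∫ ω, M ω * D (n + 1) ω ∂μ = 0 :=
      integral_mul_eq_zero_of_condExp_eq_zero (F.le n) hM_meas (hM.integrable_mul hD')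
        (hD'.integrable one_le_two) (by simpa using hcond (n + 1) (by omega))
    have hexp : ∀ ω, (∑ k ∈ Finset.Icc 1 (n + 1), D k ω) ^ 2
        = M ω ^ 2 + 2 * (M ω * D (n + 1) ω) + D (n + 1) ω ^ 2 := fun ω => by
      rw [Finset.sum_Icc_succ_top (by omega)]
      ring
    have hM2 : Integrable (fun ω => M ω ^ 2) μ := hM.integrable_sq
    have hMD : Integrable (fun ω => 2 * (M ω * D (n + 1) ω)) μ :=
      (hM.integrable_mul hD').const_mul 2
    simp_rw [hexp]
    rw [integral_add (f := fun ω => M ω ^ 2 + 2 * (M ω * D (n + 1) ω)) (hM2.add hMD)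
      hD'.integrable_sq, integral_add hM2 hMD, integral_const_mul,
      hcross, ih, Finset.sum_Icc_succ_top (by omega)]
    ring

theorem ae_tendsto_inv_mul_sum_of_condExp_eq_zero [IsProbabilityMeasure μ]
    (hD : ∀ k, StronglyMeasurable[F k] (D k)) (hL2 : ∀ k, 1 ≤ k → MemLp (D k) 2 μ)
    (hcond : ∀ k, 1 ≤ k → μ[D k | F (k - 1)] =ᵐ[μ] 0)
    (hsum : Summable fun k : ℕ => (∫ ω, D k ω ^ 2 ∂μ) / (k : ℝ) ^ 2) :
    ∀ᵐ ω ∂μ, Tendsto (fun n : ℕ => (n : ℝ)⁻¹ * ∑ k ∈ Finset.Icc 1 n, D k ω) atTop (𝓝 0) := by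
  set E : ℕ → Ω → ℝ := fun k => (k : ℝ)⁻¹ • D k
  have hE : ∀ k, StronglyMeasurable[F k] (E k) := fun k => (hD k).const_smul _
  have hE_L2 : ∀ k, 1 ≤ k → MemLp (E k) 2 μ := fun k hk => (hL2 k hk).const_smul _
  have hE_cond : ∀ k, 1 ≤ k → μ[E k | F (k - 1)] =ᵐ[μ] 0 := fun k hk => by
    filter_upwards [condExp_smul (k : ℝ)⁻¹ (D k) (F (k - 1)), hcond k hk] with ω h1 h2
    rw [h1, Pi.smul_apply, h2, Pi.zero_apply, smul_zero]
  have hE_sq : ∀ k, ∫ ω, E k ω ^ 2 ∂μ = (∫ ω, D k ω ^ 2 ∂μ) / (k : ℝ) ^ 2 := fun k => by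
    simp only [E, Pi.smul_apply, smul_eq_mul, mul_pow, integral_const_mul]
    ring
  have hmart := martingale_sum_Icc_of_condExp_eq_zero hE
    (fun k hk => (hE_L2 k hk).integrable one_le_two) hE_cond
  have hbdd : ∀ n, ∫ ω, (∑ k ∈ Finset.Icc 1 n, E k ω) ^ 2 ∂μ
      ≤ ∑' k : ℕ, (∫ ω, D k ω ^ 2 ∂μ) / (k : ℝ) ^ 2 := fun n => by
    rw [integral_sq_sum_Icc_of_condExp_eq_zero hE hE_L2 hE_cond]
    simp_rw [hE_sq]
    exact hsum.sum_le_tsum _ fun k _ =>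
      div_nonneg (integral_nonneg fun ω => sq_nonneg _) (sq_nonneg _)
  filter_upwards [hmart.exists_ae_tendsto_of_integral_sq_le
    (fun n => memLp_finsetSum _ fun k hk => hE_L2 k (Finset.mem_Icc.1 hk).1) hbdd]
    with ω ⟨l, hl⟩
  refine tendsto_inv_mul_sum_of_tendsto_sum_div (l := l) (hl.congr fun n => ?_)
  simp [E, div_eq_inv_mul]

theorem ae_tendsto_inv_mul_sum_sub_condExp [IsProbabilityMeasure μ] {Y : ℕ → Ω → ℝ}
    (hY : ∀ k, StronglyMeasurable[F k] (Y k)) (hL2 : ∀ k, 1 ≤ k → MemLp (Y k) 2 μ)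
    (hsum : Summable fun k : ℕ => (∫ ω, Y k ω ^ 2 ∂μ) / (k : ℝ) ^ 2) :
    ∀ᵐ ω ∂μ, Tendsto (fun n : ℕ => (n : ℝ)⁻¹ * ∑ k ∈ Finset.Icc 1 n,
      (Y k ω - μ[Y k | F (k - 1)] ω)) atTop (𝓝 0) := by
  set D : ℕ → Ω → ℝ := fun k => Y k - μ[Y k | F (k - 1)]
  have hD_meas : ∀ k, StronglyMeasurable[F k] (D k) := fun k =>
    (hY k).sub (stronglyMeasurable_condExp.mono (F.mono (Nat.sub_le k 1)))
  have hD_L2 : ∀ k, 1 ≤ k → MemLp (D k) 2 μ := fun k hk =>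
    (hL2 k hk).sub ((hL2 k hk).condExp one_le_two)
  have hD_cond : ∀ k, 1 ≤ k → μ[D k | F (k - 1)] =ᵐ[μ] 0 := fun k hk => by
    filter_upwards [condExp_sub ((hL2 k hk).integrable one_le_two) integrable_condExp
      (F (k - 1))] with ω hω
    rw [hω, Pi.sub_apply, condExp_of_stronglyMeasurable (F.le _) stronglyMeasurable_condExp
      integrable_condExp, sub_self, Pi.zero_apply]
  have hD_sum : Summable fun k : ℕ => (∫ ω, D k ω ^ 2 ∂μ) / (k : ℝ) ^ 2 := by
    refine hsum.of_nonneg_of_le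
      (fun k => div_nonneg (integral_nonneg fun ω => sq_nonneg _) (sq_nonneg _)) fun k => ?_
    rcases Nat.eq_zero_or_pos k with rfl | hk
    · simp
    · exact div_le_div_of_nonneg_right (integral_sq_sub_condExp_le (F.le _) (hL2 k hk))
        (sq_nonneg _)
  exact ae_tendsto_inv_mul_sum_of_condExp_eq_zero hD_meas hD_L2 hD_cond hD_sum

end MartingaleDifference

theorem ae_eventually_notMem_of_summable_measureReal {Ω : Type*} {m0 : MeasurableSpace Ω}
    {μ : Measure Ω} [IsFiniteMeasure μ] {s : ℕ → Set Ω} (hs : Summable fun k => μ.real (s k)) :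
    ∀ᵐ ω ∂μ, ∀ᶠ k in atTop, ω ∉ s k := by
  refine ae_eventually_notMem ?_
  simpa only [measureReal_def, ENNReal.ofReal_toReal (measure_ne_top μ _)] using
    hs.tsum_ofReal_ne_top

section Truncation

variable {Ω : Type*} {m0 : MeasurableSpace Ω} {μ : Measure Ω} [IsProbabilityMeasure μ]
  {F : Filtration ℕ m0} {X L : ℕ → Ω → ℝ} {c : ℝ}

theorem ae_tendsto_inv_mul_sum_sub_condExp_truncation
    (hX : ∀ k, Measurable[F k] (X k)) (hL : ∀ k, Measurable[F k] (L k))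
    (hL0 : ∀ k ω, 0 ≤ L k ω) (hXL : ∀ k, 1 ≤ k → ∀ ω, |X k ω| ≤ c * L k ω)
    (htail : Summable fun k : ℕ => μ.real {ω | (k : ℝ) < L k ω})
    (hsq : Summable fun k : ℕ => (∫ ω, truncateAt (L k ω) k ^ 2 ∂μ) / (k : ℝ) ^ 2) :
    ∀ᵐ ω ∂μ, Tendsto (fun n : ℕ => (n : ℝ)⁻¹ * ∑ k ∈ Finset.Icc 1 n,
      (X k ω - μ[fun ω' => X k ω' * (if L k ω' ≤ k then 1 else 0) | F (k - 1)] ω))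
      atTop (𝓝 0) := by
  set T : ℕ → Ω → ℝ := fun k ω => truncateAt (L k ω) k
  set Y : ℕ → Ω → ℝ := fun k ω => X k ω * (if L k ω ≤ k then 1 else 0)
  have hT_mem : ∀ (k : ℕ) ω, T k ω ∈ Set.Icc 0 (k : ℝ) := fun k ω =>
    truncateAt_mem_Icc (hL0 k ω) k.cast_nonneg
  have hT_L2 : ∀ k, MemLp (T k) 2 μ := fun k =>
    MemLp.of_bound (((hL k).mono (F.le k) le_rfl).truncateAt k).aestronglyMeasurable k <|
      ae_of_all _ fun ω => by simpa [abs_of_nonneg (hT_mem k ω).1] using (hT_mem k ω).2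
  have hY_meas : ∀ k, Measurable[F k] (Y k) := fun k =>
    (hX k).mul (Measurable.ite (measurableSet_le (hL k) measurable_const) measurable_const
      measurable_const)
  have hY_le : ∀ k, 1 ≤ k → ∀ ω, |Y k ω| ≤ c * T k ω := by
    intro k hk ω
    by_cases h : L k ω ≤ k <;> simp [Y, T, truncateAt, h, hXL k hk ω]
  have hY_L2 : ∀ k, 1 ≤ k → MemLp (Y k) 2 μ := fun k hk =>
    MemLp.of_bound ((hY_meas k).mono (F.le k) le_rfl).aestronglyMeasurable (|c| * k) <|
      ae_of_all _ fun ω => (hY_le k hk ω).trans <| (le_abs_self _).trans <| by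
        rw [abs_mul, abs_of_nonneg (hT_mem k ω).1]
        exact mul_le_mul_of_nonneg_left (hT_mem k ω).2 (abs_nonneg c)
  have hY_sq : ∀ k, 1 ≤ k → ∫ ω, Y k ω ^ 2 ∂μ ≤ c ^ 2 * ∫ ω, T k ω ^ 2 ∂μ := fun k hk => by
    rw [← integral_const_mul]
    refine integral_mono (hY_L2 k hk).integrable_sq ((hT_L2 k).integrable_sq.const_mul _)
      fun ω => ?_
    rw [← mul_pow, ← sq_abs (Y k ω)]
    exact pow_le_pow_left₀ (abs_nonneg _) (hY_le k hk ω) 2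
  have hY_sum : Summable fun k : ℕ => (∫ ω, Y k ω ^ 2 ∂μ) / (k : ℝ) ^ 2 := by
    refine (hsq.mul_left (c ^ 2)).of_nonneg_of_le
      (fun k => div_nonneg (integral_nonneg fun ω => sq_nonneg _) (sq_nonneg _)) fun k => ?_
    rcases Nat.eq_zero_or_pos k with rfl | hk
    · simp
    · rw [← mul_div_assoc]
      exact div_le_div_of_nonneg_right (hY_sq k hk) (sq_nonneg _)
  have hXY : ∀ᵐ ω ∂μ, ∀ᶠ k in atTop, X k ω - Y k ω = 0 := by
    filter_upwards [ae_eventually_notMem_of_summable_measureReal htail] with ω hω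
    filter_upwards [hω] with k hk
    simp [Y, not_lt.1 hk]
  filter_upwards [ae_tendsto_inv_mul_sum_sub_condExp (fun k => (hY_meas k).stronglyMeasurable)
    hY_L2 hY_sum, hXY] with ω hD hXY
  have hsum := (tendsto_nhds_of_eventually_eq hXY).cesaro_Icc.add hD
  rw [add_zero] at hsum
  refine hsum.congr fun n => ?_
  rw [← mul_add, ← Finset.sum_add_distrib]
  exact congrArg _ (Finset.sum_congr rfl fun k _ => by ring)

end Truncation

theorem lintegral_ofReal_sq_eq_lintegral_meas_lt_mul {Ω : Type*} {m0 : MeasurableSpace Ω}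
    (μ : Measure Ω) {f : Ω → ℝ} (hf0 : 0 ≤ᵐ[μ] f) (hf : AEMeasurable f μ) :
    ∫⁻ ω, ENNReal.ofReal (f ω ^ 2) ∂μ
      = ∫⁻ t in Set.Ioi 0, μ {ω | t < f ω} * ENNReal.ofReal (2 * t) := by
  rw [← lintegral_comp_eq_lintegral_meas_lt_mul μ hf0 hf (g := fun t => 2 * t)
    (fun t _ => (continuous_const.mul continuous_id).intervalIntegrable 0 t)
    (ae_restrict_of_forall_mem measurableSet_Ioi fun t (ht : 0 < t) => by positivity)]
  refine lintegral_congr fun ω => ?_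
  rw [intervalIntegral.integral_const_mul, integral_id]
  ring_nf

theorem ENNReal.tsum_ite_lt_ofReal_inv_sq_le {t : ℝ} (ht : 0 < t) :
    ∑' k : ℕ, (if t < k then ENNReal.ofReal ((k : ℝ) ^ 2)⁻¹ else 0) ≤ ENNReal.ofReal (2 / t) := by
  refine ENNReal.tsum_le_of_sum_range_le fun n => ?_
  rw [← Finset.sum_filter, ← ENNReal.ofReal_sum_of_nonneg fun k _ => by positivity]
  refine ENNReal.ofReal_le_ofReal ?_
  calc ∑ k ∈ (Finset.range n).filter (fun k : ℕ => t < k), ((k : ℝ) ^ 2)⁻¹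
      ≤ ∑ k ∈ Finset.Ioo ⌊t⌋₊ n, ((k : ℝ) ^ 2)⁻¹ :=
        Finset.sum_le_sum_of_subset_of_nonneg (fun k hk => by
          simp only [Finset.mem_filter, Finset.mem_range, Finset.mem_Ioo] at hk ⊢
          exact ⟨(Nat.floor_lt ht.le).2 hk.2, hk.1⟩) fun k _ _ => by positivity
    _ ≤ 2 / (⌊t⌋₊ + 1) := sum_Ioo_inv_sq_le _ _
    _ ≤ 2 / t := div_le_div_of_nonneg_left zero_le_two ht (Nat.lt_floor_add_one t).le

section TailDomination

variable {Ω : Type*} {m0 : MeasurableSpace Ω} {μ : Measure Ω}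
  {L : ℕ → Ω → ℝ} {R : Ω → ℝ} {C : ℝ≥0∞}

theorem summable_measureReal_lt_of_tail_le [IsProbabilityMeasure μ] (hR : Integrable R μ)
    (hR0 : 0 ≤ R) (hC : C ≠ ∞)
    (hLR : ∀ n, 1 ≤ n → ∀ x : ℝ, 0 < x → μ {ω | x < L n ω} ≤ C * μ {ω | x < R ω}) :
    Summable fun k : ℕ => μ.real {ω | (k : ℝ) < L k ω} := by
  have hR_tail : Summable fun k : ℕ => μ.real {ω | (k : ℝ) < R ω} := by
    let _ : MeasureSpace Ω := ⟨μ⟩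
    exact ENNReal.summable_toReal (ProbabilityTheory.tsum_prob_mem_Ioi_lt_top hR hR0).ne
  refine (hR_tail.mul_left C.toReal).of_norm_bounded_eventually_nat ?_
  filter_upwards [eventually_ge_atTop 1] with k hk
  rw [Real.norm_of_nonneg measureReal_nonneg, measureReal_def, measureReal_def,
    ← ENNReal.toReal_mul]
  exact ENNReal.toReal_mono (ENNReal.mul_ne_top hC (measure_ne_top _ _))
    (hLR k hk k (by exact_mod_cast hk))

theorem tsum_lintegral_sq_truncateAt_le_of_tail_le (hL : ∀ k, Measurable (L k))
    (hL0 : ∀ k ω, 0 ≤ L k ω) (hR : AEMeasurable R μ) (hR0 : 0 ≤ R)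
    (hLR : ∀ n, 1 ≤ n → ∀ x : ℝ, 0 < x → μ {ω | x < L n ω} ≤ C * μ {ω | x < R ω}) :
    ∑' k : ℕ, ENNReal.ofReal ((k : ℝ) ^ 2)⁻¹ * ∫⁻ ω, ENNReal.ofReal (truncateAt (L k ω) k ^ 2) ∂μ
      ≤ 4 * C * ∫⁻ ω, ENNReal.ofReal (R ω) ∂μ := by
  set T : ℕ → Ω → ℝ := fun k ω => truncateAt (L k ω) k
  have hT_mem : ∀ (k : ℕ) ω, T k ω ∈ Set.Icc 0 (k : ℝ) := fun k ω =>
    truncateAt_mem_Icc (hL0 k ω) k.cast_nonneg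
  have hT_tail : ∀ (k : ℕ) (t : ℝ), 0 < t →
      μ {ω | t < T k ω} ≤ if t < k then C * μ {ω | t < R ω} else 0 := fun k t ht => by
    refine (measure_lt_truncateAt_le μ (L k) ht.le k).trans ?_
    split_ifs with htk
    exacts [hLR k (Nat.cast_pos.1 (ht.trans htk)) t ht, le_rfl]
  have hR_tail_meas : Measurable fun t : ℝ => μ {ω | t < R ω} :=
    Antitone.measurable fun s t hst => measure_mono fun ω (hω : t < R ω) => hst.trans_lt hω
  -- layer cake in `ω`, then the sum over `k` is taken inside the integral over the level `t`
  calc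
    _ = ∑' k : ℕ, ∫⁻ t in Set.Ioi (0 : ℝ),
          ENNReal.ofReal ((k : ℝ) ^ 2)⁻¹ * (μ {ω | t < T k ω} * ENNReal.ofReal (2 * t)) := by
        refine tsum_congr fun k => ?_
        rw [lintegral_ofReal_sq_eq_lintegral_meas_lt_mul μ (ae_of_all _ fun ω => (hT_mem k ω).1)
          ((hL k).truncateAt k).aemeasurable, lintegral_const_mul' _ _ ENNReal.ofReal_ne_top]
    _ ≤ ∑' k : ℕ, ∫⁻ t in Set.Ioi (0 : ℝ),
          (if t < k then ENNReal.ofReal ((k : ℝ) ^ 2)⁻¹ else 0) *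
            (C * μ {ω | t < R ω} * ENNReal.ofReal (2 * t)) := by
        refine ENNReal.tsum_le_tsum fun k => lintegral_mono_ae ?_
        filter_upwards [ae_restrict_mem measurableSet_Ioi] with t (ht : 0 < t)
        have := hT_tail k t ht
        split_ifs at this ⊢
        · gcongr
        · simp [nonpos_iff_eq_zero.1 this]
    _ = ∫⁻ t in Set.Ioi (0 : ℝ), ∑' k : ℕ,
          (if t < k then ENNReal.ofReal ((k : ℝ) ^ 2)⁻¹ else 0) *
            (C * μ {ω | t < R ω} * ENNReal.ofReal (2 * t)) :=
        (lintegral_tsum fun k => ((Measurable.ite measurableSet_Iio measurable_const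
          measurable_const).mul ((measurable_const.mul hR_tail_meas).mul
          (measurable_const.mul measurable_id).ennreal_ofReal)).aemeasurable).symm
    _ = ∫⁻ t in Set.Ioi (0 : ℝ),
          (∑' k : ℕ, if t < k then ENNReal.ofReal ((k : ℝ) ^ 2)⁻¹ else 0) *
            (C * μ {ω | t < R ω} * ENNReal.ofReal (2 * t)) := by
        simp_rw [ENNReal.tsum_mul_right]
    _ ≤ ∫⁻ t in Set.Ioi (0 : ℝ), 4 * C * μ {ω | t < R ω} := by
        refine lintegral_mono_ae ?_
        filter_upwards [ae_restrict_mem measurableSet_Ioi] with t (ht : 0 < t)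
        calc _ ≤ ENNReal.ofReal (2 / t) * (C * μ {ω | t < R ω} * ENNReal.ofReal (2 * t)) := by
              gcongr
              exact ENNReal.tsum_ite_lt_ofReal_inv_sq_le ht
          _ = ENNReal.ofReal (2 / t * (2 * t)) * C * μ {ω | t < R ω} := by
              rw [ENNReal.ofReal_mul (by positivity : (0 : ℝ) ≤ 2 / t)]
              ring
          _ = 4 * C * μ {ω | t < R ω} := by
              rw [show 2 / t * (2 * t) = 4 by field_simp; norm_num, ENNReal.ofReal_ofNat]
    _ = 4 * C * ∫⁻ ω, ENNReal.ofReal (R ω) ∂μ := by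
        rw [lintegral_const_mul _ hR_tail_meas,
          lintegral_eq_lintegral_meas_lt μ (ae_of_all _ hR0) hR]

theorem summable_integral_sq_truncateAt_div_of_tail_le (hL : ∀ k, Measurable (L k))
    (hL0 : ∀ k ω, 0 ≤ L k ω) (hR : Integrable R μ) (hR0 : 0 ≤ R) (hC : C ≠ ∞)
    (hLR : ∀ n, 1 ≤ n → ∀ x : ℝ, 0 < x → μ {ω | x < L n ω} ≤ C * μ {ω | x < R ω}) :
    Summable fun k : ℕ => (∫ ω, truncateAt (L k ω) k ^ 2 ∂μ) / (k : ℝ) ^ 2 := by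
  have hfin : 4 * C * ∫⁻ ω, ENNReal.ofReal (R ω) ∂μ ≠ ∞ :=
    ENNReal.mul_ne_top (ENNReal.mul_ne_top ENNReal.ofNat_ne_top hC) hR.lintegral_lt_top.ne
  refine (ENNReal.summable_toReal (ne_top_of_le_ne_top hfin
    (tsum_lintegral_sq_truncateAt_le_of_tail_le hL hL0 hR.aemeasurable hR0 hLR))).congr fun k => ?_
  rw [ENNReal.toReal_mul, ENNReal.toReal_ofReal (by positivity),
    ← integral_eq_lintegral_of_nonneg_ae (ae_of_all _ fun ω => sq_nonneg _)
      (((hL k).truncateAt k).pow_const 2).aestronglyMeasurable, div_eq_inv_mul]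

end TailDomination

section MomentBound

variable {Ω : Type*} {m0 : MeasurableSpace Ω} {μ : Measure Ω}
  {L : ℕ → Ω → ℝ} {φ : ℝ → ℝ} {M : ℝ≥0∞}

theorem summable_measureReal_lt_of_lintegral_mul_le (hL : ∀ k, Measurable (L k))
    (hL0 : ∀ k ω, 0 ≤ L k ω) (hφpos : ∀ᶠ x in atTop, 0 < φ x)
    (hφmono : ∀ᶠ x in atTop, ∀ y, x ≤ y → φ x ≤ φ y)
    (hφsum : Summable fun n : ℕ => 1 / (n * φ n)) (hM : M ≠ ∞)
    (hLM : ∀ n, 1 ≤ n → ∫⁻ ω, ENNReal.ofReal (L n ω * φ (L n ω)) ∂μ ≤ M) :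
    Summable fun k : ℕ => μ.real {ω | (k : ℝ) < L k ω} := by
  refine (hφsum.mul_left M.toReal).of_norm_bounded_eventually_nat ?_
  filter_upwards [tendsto_natCast_atTop_atTop.eventually (hφpos.and hφmono),
    eventually_ge_atTop 1] with k ⟨hφk, hmono⟩ hk
  set A := {ω | (k : ℝ) < L k ω}
  -- Markov's inequality, written with `lintegral_mono` since `φ` need not be measurable
  have hmarkov : ENNReal.ofReal (k * φ k) * μ A ≤ M := calc
    _ = ∫⁻ ω, A.indicator (fun _ => ENNReal.ofReal (k * φ k)) ω ∂μ :=
      (lintegral_indicator_const (measurableSet_lt measurable_const (hL k)) _).symm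
    _ ≤ ∫⁻ ω, ENNReal.ofReal (L k ω * φ (L k ω)) ∂μ := lintegral_mono fun ω => by
      by_cases hω : ω ∈ A
      · rw [Set.indicator_of_mem hω]
        exact ENNReal.ofReal_le_ofReal (mul_le_mul (le_of_lt hω) (hmono _ (le_of_lt hω)) hφk.le
          (hL0 k ω))
      · simp [hω]
    _ ≤ M := hLM k hk
  have hkφ : 0 < (k : ℝ) * φ k := mul_pos (by exact_mod_cast hk) hφk
  rw [Real.norm_of_nonneg measureReal_nonneg, mul_one_div, le_div_iff₀ hkφ, mul_comm,
    measureReal_def, ← ENNReal.toReal_ofReal hkφ.le, ← ENNReal.toReal_mul]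
  exact ENNReal.toReal_mono hM hmarkov

theorem sq_truncateAt_le_of_div_le {x a x₀ : ℝ} (hx : 0 ≤ x) (hφx : 0 ≤ φ x)
    (ha : 0 ≤ a / φ a) (hratio : x₀ < x → x ≤ a → 0 < φ x ∧ x / φ x ≤ a / φ a) :
    truncateAt x a ^ 2 ≤ x₀ ^ 2 + a / φ a * (x * φ x) := by
  have hrest : 0 ≤ a / φ a * (x * φ x) := mul_nonneg ha (mul_nonneg hx hφx)
  unfold truncateAt
  split_ifs with hxa
  · rcases le_or_gt x x₀ with hxx₀ | hxx₀
    · nlinarith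
    · obtain ⟨hφx, hxφ⟩ := hratio hxx₀ hxa
      calc x ^ 2 = x / φ x * (x * φ x) := by field_simp
        _ ≤ a / φ a * (x * φ x) := mul_le_mul_of_nonneg_right hxφ (mul_nonneg hx hφx.le)
        _ ≤ _ := le_add_of_nonneg_left (sq_nonneg x₀)
  · nlinarith [sq_nonneg x₀]

theorem integral_sq_truncateAt_le_of_div_le [IsProbabilityMeasure μ] {f : Ω → ℝ}
    (hf : Measurable f) (hf0 : ∀ ω, 0 ≤ f ω) (hφ0 : ∀ x, 0 ≤ x → 0 ≤ φ x) {a x₀ : ℝ}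
    (ha : 0 ≤ a / φ a) (hratio : ∀ x, x₀ < x → x ≤ a → 0 < φ x ∧ x / φ x ≤ a / φ a)
    (hM : M ≠ ∞) (hfM : ∫⁻ ω, ENNReal.ofReal (f ω * φ (f ω)) ∂μ ≤ M) :
    ∫ ω, truncateAt (f ω) a ^ 2 ∂μ ≤ x₀ ^ 2 + a / φ a * M.toReal := by
  have hlint : ∫⁻ ω, ENNReal.ofReal (truncateAt (f ω) a ^ 2) ∂μ
      ≤ ENNReal.ofReal (x₀ ^ 2) + ENNReal.ofReal (a / φ a) * M := calc
    _ ≤ ∫⁻ ω, (ENNReal.ofReal (x₀ ^ 2)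
          + ENNReal.ofReal (a / φ a) * ENNReal.ofReal (f ω * φ (f ω))) ∂μ :=
        lintegral_mono fun ω => by
          have hfφ : 0 ≤ f ω * φ (f ω) := mul_nonneg (hf0 ω) (hφ0 _ (hf0 ω))
          rw [← ENNReal.ofReal_mul ha, ← ENNReal.ofReal_add (sq_nonneg _) (mul_nonneg ha hfφ)]
          exact ENNReal.ofReal_le_ofReal <|
            sq_truncateAt_le_of_div_le (hf0 ω) (hφ0 _ (hf0 ω)) ha (hratio _)
    _ = ENNReal.ofReal (x₀ ^ 2)
          + ENNReal.ofReal (a / φ a) * ∫⁻ ω, ENNReal.ofReal (f ω * φ (f ω)) ∂μ := by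
        rw [lintegral_add_left measurable_const, lintegral_const, measure_univ, mul_one,
          lintegral_const_mul' _ _ ENNReal.ofReal_ne_top]
    _ ≤ _ := by gcongr
  rw [integral_eq_lintegral_of_nonneg_ae (ae_of_all _ fun ω => sq_nonneg _)
    ((hf.truncateAt a).pow_const 2).aestronglyMeasurable]
  refine (ENNReal.toReal_mono (by finiteness) hlint).trans_eq ?_
  rw [ENNReal.toReal_add ENNReal.ofReal_ne_top (by finiteness), ENNReal.toReal_mul,
    ENNReal.toReal_ofReal (sq_nonneg _), ENNReal.toReal_ofReal ha]

theorem summable_integral_sq_truncateAt_div_of_lintegral_mul_le [IsProbabilityMeasure μ]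
    (hL : ∀ k, Measurable (L k)) (hL0 : ∀ k ω, 0 ≤ L k ω) (hφ0 : ∀ x, 0 ≤ x → 0 ≤ φ x)
    (hφpos : ∀ᶠ x in atTop, 0 < φ x) (hφratio : ∀ᶠ x in atTop, ∀ y, x ≤ y → x / φ x ≤ y / φ y)
    (hφsum : Summable fun n : ℕ => 1 / (n * φ n)) (hM : M ≠ ∞)
    (hLM : ∀ n, 1 ≤ n → ∫⁻ ω, ENNReal.ofReal (L n ω * φ (L n ω)) ∂μ ≤ M) :
    Summable fun k : ℕ => (∫ ω, truncateAt (L k ω) k ^ 2 ∂μ) / (k : ℝ) ^ 2 := by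
  obtain ⟨x₀, hx₀⟩ := eventually_atTop.1 (hφpos.and hφratio)
  refine (((Real.summable_one_div_nat_pow.2 one_lt_two).mul_left (x₀ ^ 2)).add
    (hφsum.mul_left M.toReal)).of_norm_bounded_eventually_nat ?_
  filter_upwards [eventually_ge_atTop ⌈x₀⌉₊, eventually_ge_atTop 1] with k hkx hk
  have hk0 : (0 : ℝ) < k := by exact_mod_cast hk
  have hφk : 0 < φ k := (hx₀ k (Nat.ceil_le.1 hkx)).1
  have hint := integral_sq_truncateAt_le_of_div_le (hL k) (hL0 k) hφ0 (by positivity)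
    (fun x hx₀x hxk => (hx₀ x hx₀x.le).imp_right (· _ hxk)) hM (hLM k hk)
  rw [Real.norm_of_nonneg (div_nonneg (integral_nonneg fun _ => sq_nonneg _) (sq_nonneg _))]
  calc (∫ ω, truncateAt (L k ω) k ^ 2 ∂μ) / (k : ℝ) ^ 2
      ≤ (x₀ ^ 2 + k / φ k * M.toReal) / (k : ℝ) ^ 2 :=
        div_le_div_of_nonneg_right hint (sq_nonneg _)
    _ = x₀ ^ 2 * (1 / (k : ℝ) ^ 2) + M.toReal * (1 / (k * φ k)) := by
        field_simp

end MomentBound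

theorem urn_truncated_centering_cesaro_general
    {Ω : Type} {m0 : MeasurableSpace Ω} {μ : Measure Ω} [IsProbabilityMeasure μ]
    {K : ℕ}
    (F : Filtration ℕ m0)
    (R : ℕ → Ω → Fin K → Fin K → ℝ)
    -- adaptedness to the filtration `F_n = σ(C_0, (R_m, χ_m)_{m ≤ n})`
    (hRmeas : ∀ n, Measurable[F n] (R n))
    -- Assumption 2 : (a) majorization, or (b) a uniform `L φ(L)` moment bound
    (hA2 :
      (∃ c : ℝ, 0 < c ∧ ∃ Rmaj : Ω → ℝ, Measurable Rmaj ∧ (∀ ω, 0 < Rmaj ω) ∧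
        Integrable Rmaj μ ∧
        ∀ n, 1 ≤ n → ∀ x : ℝ, 0 < x →
          μ {ω | x < matNorm (R n ω)} ≤ ENNReal.ofReal c * μ {ω | x < Rmaj ω}) ∨
      (∃ φ : ℝ → ℝ, (∀ x, 0 ≤ x → 0 ≤ φ x) ∧
        (∃ x₀ : ℝ, ∀ x, x₀ ≤ x → 0 < φ x) ∧
        (∃ x₀ : ℝ, ∀ x y, x₀ ≤ x → x ≤ y → φ x ≤ φ y) ∧
        (Summable fun n : ℕ => 1 / (n * φ n)) ∧
        (∃ x₀ : ℝ, ∀ x y, x₀ ≤ x → x ≤ y → x / φ x ≤ y / φ y) ∧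
        (∃ M : ℝ≥0∞, M < ⊤ ∧ ∀ n, 1 ≤ n →
          ∫⁻ ω, ENNReal.ofReal (matNorm (R n ω) * φ (matNorm (R n ω))) ∂μ ≤ M)))
    -- the dominated adapted sequence `(X_n)`
    (X : ℕ → Ω → ℝ) (hXmeas : ∀ n, Measurable[F n] (X n))
    (c' : ℝ)
    (hXdom : ∀ n, 1 ≤ n → ∀ ω, |X n ω| ≤ c' * matNorm (R n ω)) :
    ∀ᵐ ω ∂μ, Tendsto (fun n : ℕ =>
        (n : ℝ)⁻¹ * ∑ k ∈ Finset.Icc 1 n,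
          (X k ω - (μ[fun ω' => X k ω' *
            (if matNorm (R k ω') ≤ (k : ℝ) then 1 else 0) | F (k-1)]) ω))
      atTop (𝓝 0) := by
  set L : ℕ → Ω → ℝ := fun k ω => matNorm (R k ω)
  have hL : ∀ k, Measurable[F k] (L k) := fun k => (hRmeas k).matNorm
  have hL' : ∀ k, Measurable (L k) := fun k => (hL k).mono (F.le k) le_rfl
  have hL0 : ∀ k ω, 0 ≤ L k ω := fun k ω => matNorm_nonneg _
  have key := ae_tendsto_inv_mul_sum_sub_condExp_truncation (μ := μ) hXmeas hL hL0 hXdom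
  rcases hA2 with ⟨c, -, Rmaj, -, hRpos, hRint, hLR⟩ |
    ⟨φ, hφ0, hφpos, ⟨x₁, hφmono⟩, hφsum, ⟨x₂, hφratio⟩, M, hM, hLM⟩
  · have hR0 : 0 ≤ Rmaj := fun ω => (hRpos ω).le
    exact key (summable_measureReal_lt_of_tail_le hRint hR0 ENNReal.ofReal_ne_top hLR)
      (summable_integral_sq_truncateAt_div_of_tail_le hL' hL0 hRint hR0 ENNReal.ofReal_ne_top hLR)
  · replace hφpos := eventually_atTop.2 hφpos
    exact key (summable_measureReal_lt_of_lintegral_mul_le hL' hL0 hφpos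
        (eventually_atTop.2 ⟨x₁, fun x hx y => hφmono x y hx⟩) hφsum hM.ne hLM)
      (summable_integral_sq_truncateAt_div_of_lintegral_mul_le hL' hL0 hφ0 hφpos
        (eventually_atTop.2 ⟨x₂, fun x hx y => hφratio x y hx⟩) hφsum hM.ne hLM)

/-- **Proposition.**  In an urn model satisfying Assumptions 1 and 2, if `(X_n)` is adapted
to `(F_n)` with `|X_n| ≤ c′·‖R_n‖`, then almost surely
`(1/n) Σ_{k=1}^n (X_k − E[X_k 1{‖R_k‖ ≤ k} | F_{k−1}]) → 0`. -/
theorem urn_truncated_centering_cesaro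
    {Ω : Type} {m0 : MeasurableSpace Ω} {μ : Measure Ω} [IsProbabilityMeasure μ]
    {K : ℕ} (hK : 0 < K)
    (F : Filtration ℕ m0)
    (C : ℕ → Ω → Fin K → ℝ) (R : ℕ → Ω → Fin K → Fin K → ℝ) (χ : ℕ → Ω → Fin K)
    (S : ℕ → Ω → ℝ) (hS : ∀ n ω, S n ω = ∑ i, C n ω i)
    (N : ℕ → Ω → Fin K → ℝ)
    (hN : ∀ n ω i, N n ω i = ∑ m ∈ Finset.Icc 1 n, (if χ m ω = i then (1:ℝ) else 0))
    -- evolution of the composition vector and nonnegativity of replacements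
    (hEvol : ∀ n, 1 ≤ n → ∀ ω j, C n ω j = C (n-1) ω j + R n ω (χ n ω) j)
    (hRnonneg : ∀ n, 1 ≤ n → ∀ ω i j, 0 ≤ R n ω i j)
    -- adaptedness to the filtration `F_n = σ(C_0, (R_m, χ_m)_{m ≤ n})`
    (hC0meas : Measurable[F 0] (C 0))
    (hχmeas : ∀ n, Measurable[F n] (χ n))
    (hRmeas : ∀ n, Measurable[F n] (R n))
    (hRint : ∀ n, 1 ≤ n → ∀ i j, Integrable (fun ω => R n ω i j) μ)
    -- Assumption 1
    (hC0nonneg : ∀ ω i, 0 ≤ C 0 ω i)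
    (hC0ne : ∀ ω, C 0 ω ≠ 0)
    (hC0int : ∀ i, Integrable (fun ω => C 0 ω i) μ)
    (hCond : ∀ n, 1 ≤ n → ∀ i,
      μ[fun ω => (if χ n ω = i then (1:ℝ) else 0) | F (n-1)]
        =ᵐ[μ] fun ω => C (n-1) ω i / S (n-1) ω)
    (hCondIndep : ∀ n, 1 ≤ n → ∀ (i : Fin K) (B : Set (Fin K → Fin K → ℝ)),
      MeasurableSet B →
      μ[fun ω => (if χ n ω = i then (1:ℝ) else 0) * Set.indicator B 1 (R n ω) | F (n-1)]
        =ᵐ[μ] fun ω =>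
          (μ[fun ω' => (if χ n ω' = i then (1:ℝ) else 0) | F (n-1)]) ω *
          (μ[fun ω' => Set.indicator B 1 (R n ω') | F (n-1)]) ω)
    -- Assumption 2 : (a) majorization, or (b) a uniform `L φ(L)` moment bound
    (hA2 :
      (∃ c : ℝ, 0 < c ∧ ∃ Rmaj : Ω → ℝ, Measurable Rmaj ∧ (∀ ω, 0 < Rmaj ω) ∧
        Integrable Rmaj μ ∧
        ∀ n, 1 ≤ n → ∀ x : ℝ, 0 < x →
          μ {ω | x < matNorm (R n ω)} ≤ ENNReal.ofReal c * μ {ω | x < Rmaj ω}) ∨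
      (∃ φ : ℝ → ℝ, (∀ x, 0 ≤ x → 0 ≤ φ x) ∧
        (∃ x₀ : ℝ, ∀ x, x₀ ≤ x → 0 < φ x) ∧
        (∃ x₀ : ℝ, ∀ x y, x₀ ≤ x → x ≤ y → φ x ≤ φ y) ∧
        (Summable fun n : ℕ => 1 / (n * φ n)) ∧
        (∃ x₀ : ℝ, ∀ x y, x₀ ≤ x → x ≤ y → x / φ x ≤ y / φ y) ∧
        (∃ M : ℝ≥0∞, M < ⊤ ∧ ∀ n, 1 ≤ n →
          ∫⁻ ω, ENNReal.ofReal (matNorm (R n ω) * φ (matNorm (R n ω))) ∂μ ≤ M)))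
    -- the dominated adapted sequence `(X_n)`
    (X : ℕ → Ω → ℝ) (hXmeas : ∀ n, Measurable[F n] (X n))
    (c' : ℝ) (hc' : 0 < c')
    (hXdom : ∀ n, 1 ≤ n → ∀ ω, |X n ω| ≤ c' * matNorm (R n ω)) :
    ∀ᵐ ω ∂μ, Tendsto (fun n : ℕ =>
        (n : ℝ)⁻¹ * ∑ k ∈ Finset.Icc 1 n,
          (X k ω - (μ[fun ω' => X k ω' *
            (if matNorm (R k ω') ≤ (k : ℝ) then 1 else 0) | F (k-1)]) ω))
      atTop (𝓝 0) :=
  urn_truncated_centering_cesaro_general F R hRmeas hA2 X hXmeas c' hXdom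

end
end

section
/- Let (X_n)_{n≥1} be nonnegative random variables and φ a nonnegative function on [0,∞) that is eventually positive and nondecreasing, with Σ_n 1/(n φ(n)) < ∞ and x/φ(x) eventually nondecreasing. If sup_n E(X_n φ(X_n)) < ∞, then Σ_{n≥1} n^{−2} E(X_n² 1{X_n ≤ n}) < ∞. -/
open MeasureTheory
open scoped ENNReal

/-- **Lemma.**  If `(X_n)_{n≥1}` are nonnegative random variables with
`sup_n E(X_n φ(X_n)) < ∞` for a nonnegative function `φ`, eventually positive and
nondecreasing, with `Σ 1/(n φ(n)) < ∞` and `x/φ(x)` eventually nondecreasing, then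
`Σ_{n≥1} n⁻² E(X_n² 1{X_n ≤ n}) < ∞`. -/
theorem truncated_second_moment_sum_phi
    {Ω : Type} [MeasurableSpace Ω] (μ : Measure Ω) [IsProbabilityMeasure μ]
    (X : ℕ → Ω → ℝ) (hXmeas : ∀ n, 1 ≤ n → Measurable (X n))
    (hXnonneg : ∀ n, 1 ≤ n → ∀ ω, 0 ≤ X n ω)
    (φ : ℝ → ℝ) (hφ_nonneg : ∀ x, 0 ≤ x → 0 ≤ φ x)
    (hφ_pos : ∃ x₀ : ℝ, ∀ x, x₀ ≤ x → 0 < φ x)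
    (hφ_mono : ∃ x₀ : ℝ, ∀ x y, x₀ ≤ x → x ≤ y → φ x ≤ φ y)
    (hφ_sum : Summable fun n : ℕ => 1 / (n * φ n))
    (hφ_ratio : ∃ x₀ : ℝ, ∀ x y, x₀ ≤ x → x ≤ y → x / φ x ≤ y / φ y)
    (hmom : ∃ M : ℝ≥0∞, M < ⊤ ∧ ∀ n, 1 ≤ n →
      ∫⁻ ω, ENNReal.ofReal (X n ω * φ (X n ω)) ∂μ ≤ M) :
    (∑' n : ℕ, (((n : ℝ≥0∞) + 1) ^ 2)⁻¹ *
        ∫⁻ ω, ENNReal.ofReal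
          (if X (n+1) ω ≤ (n : ℝ) + 1 then (X (n+1) ω) ^ 2 else 0) ∂μ) < ⊤ := by
  obtain ⟨a, ha⟩ := hφ_pos
  obtain ⟨cc, hcc⟩ := hφ_ratio
  obtain ⟨M, hMtop, hMb⟩ := hmom
  set x₀ : ℝ := max (max a cc) 1 with hx₀
  have hx₀1 : (1:ℝ) ≤ x₀ := le_max_right _ _
  have hx₀0 : (0:ℝ) ≤ x₀ := by linarith
  have hax : a ≤ x₀ := le_trans (le_max_left _ _) (le_max_left _ _)
  have hcx : cc ≤ x₀ := le_trans (le_max_right _ _) (le_max_left _ _)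
  -- pointwise real bound
  have key : ∀ (N : ℝ), 1 ≤ N → ∀ x : ℝ, 0 ≤ x →
      (if x ≤ N then x^2 else 0) ≤
        x₀^2 + (if x₀ ≤ N then N / φ N else 0) * (x * φ x) := by
    intro N hN x hx
    have hxφ : 0 ≤ x * φ x := mul_nonneg hx (hφ_nonneg x hx)
    split_ifs with h1 h2 h3
    · -- x ≤ N, x₀ ≤ N
      have hφN : 0 < φ N := ha N (le_trans hax h2)
      have hNd : 0 ≤ N / φ N := div_nonneg (by linarith) hφN.le
      by_cases hxx : x ≤ x₀
      · nlinarith [mul_nonneg hNd hxφ]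
      · push_neg at hxx
        have hφx : 0 < φ x := ha x (le_trans hax hxx.le)
        have hr : x / φ x ≤ N / φ N := hcc x N (le_trans hcx hxx.le) h1
        have hsq : x^2 = (x / φ x) * (x * φ x) := by field_simp
        have : (x / φ x) * (x * φ x) ≤ (N / φ N) * (x * φ x) :=
          mul_le_mul_of_nonneg_right hr hxφ
        nlinarith
    · -- x ≤ N < x₀
      push_neg at h2
      have : x ≤ x₀ := le_trans h1 h2.le
      nlinarith
    · have hφN : 0 < φ N := ha N (le_trans hax h3)
      have hNd : 0 ≤ N / φ N := div_nonneg (by linarith) hφN.le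
      nlinarith [mul_nonneg hNd hxφ]
    · positivity
  -- sequence e
  set e : ℕ → ℝ := fun n => if x₀ ≤ (n:ℝ)+1 then 1 / (((n:ℝ)+1) * φ ((n:ℝ)+1)) else 0 with he
  have he_nonneg : ∀ n, 0 ≤ e n := by
    intro n
    simp only [he]
    split_ifs with h
    · have hφN : 0 < φ ((n:ℝ)+1) := ha _ (le_trans hax h)
      positivity
    · exact le_rfl
  -- e is summable
  have hg : Summable (fun n : ℕ => 1 / (((n:ℝ)+1) * φ ((n:ℝ)+1))) := by
    have h := (summable_nat_add_iff (f := fun n : ℕ => 1 / ((n:ℝ) * φ (n:ℝ))) 1).mpr hφ_sum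
    simpa using h
  have hg_nonneg : ∀ n : ℕ, (0:ℝ) ≤ 1 / (((n:ℝ)+1) * φ ((n:ℝ)+1)) := by
    intro n
    have h1 : (0:ℝ) ≤ (n:ℝ)+1 := by positivity
    exact div_nonneg zero_le_one (mul_nonneg h1 (hφ_nonneg _ h1))
  have he_sum : Summable e := by
    apply Summable.of_nonneg_of_le he_nonneg _ hg
    intro n
    simp only [he]
    split_ifs with h
    · exact le_rfl
    · exact hg_nonneg n
  -- per-term bound
  have hterm : ∀ n : ℕ,
      (((n : ℝ≥0∞) + 1) ^ 2)⁻¹ *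
          ∫⁻ ω, ENNReal.ofReal (if X (n+1) ω ≤ (n:ℝ)+1 then (X (n+1) ω)^2 else 0) ∂μ
        ≤ (((n : ℝ≥0∞) + 1) ^ 2)⁻¹ * ENNReal.ofReal (x₀^2) + ENNReal.ofReal (e n) * M := by
    intro n
    set N : ℝ := (n:ℝ) + 1 with hNdef
    have hN1 : (1:ℝ) ≤ N := by rw [hNdef]; have : (0:ℝ) ≤ (n:ℝ) := Nat.cast_nonneg n; linarith
    have hN0 : (0:ℝ) < N := by linarith
    set cn : ℝ := if x₀ ≤ N then N / φ N else 0 with hcn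
    have hcn_nonneg : 0 ≤ cn := by
      rw [hcn]; split_ifs with h
      · exact div_nonneg (by linarith) (ha N (le_trans hax h)).le
      · exact le_rfl
    have hint : ∫⁻ ω, ENNReal.ofReal (if X (n+1) ω ≤ N then (X (n+1) ω)^2 else 0) ∂μ
        ≤ ENNReal.ofReal (x₀^2) + ENNReal.ofReal cn * M := by
      calc ∫⁻ ω, ENNReal.ofReal (if X (n+1) ω ≤ N then (X (n+1) ω)^2 else 0) ∂μ
          ≤ ∫⁻ ω, (ENNReal.ofReal (x₀^2) +
              ENNReal.ofReal cn * ENNReal.ofReal (X (n+1) ω * φ (X (n+1) ω))) ∂μ := by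
            apply lintegral_mono
            intro ω
            have hx := hXnonneg (n+1) (by omega) ω
            have h := key N hN1 (X (n+1) ω) hx
            calc ENNReal.ofReal (if X (n+1) ω ≤ N then (X (n+1) ω)^2 else 0)
                ≤ ENNReal.ofReal (x₀^2 + cn * (X (n+1) ω * φ (X (n+1) ω))) :=
                  ENNReal.ofReal_le_ofReal h
              _ ≤ ENNReal.ofReal (x₀^2) +
                  ENNReal.ofReal (cn * (X (n+1) ω * φ (X (n+1) ω))) := ENNReal.ofReal_add_le
              _ = _ := by rw [ENNReal.ofReal_mul hcn_nonneg]
        _ = ENNReal.ofReal (x₀^2) +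
            ENNReal.ofReal cn * ∫⁻ ω, ENNReal.ofReal (X (n+1) ω * φ (X (n+1) ω)) ∂μ := by
            rw [lintegral_add_left measurable_const, lintegral_const, measure_univ, mul_one,
              lintegral_const_mul' _ _ ENNReal.ofReal_ne_top]
        _ ≤ ENNReal.ofReal (x₀^2) + ENNReal.ofReal cn * M := by
            gcongr
            exact hMb (n+1) (by omega)
    have hinv : (((n : ℝ≥0∞) + 1) ^ 2)⁻¹ = ENNReal.ofReal ((N^2)⁻¹) := by
      have h1 : ((n : ℝ≥0∞) + 1) = ENNReal.ofReal N := by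
        rw [hNdef, ENNReal.ofReal_add (Nat.cast_nonneg n) zero_le_one]
        simp
      rw [h1, ← ENNReal.ofReal_pow hN0.le, ENNReal.ofReal_inv_of_pos (by positivity)]
    have hen : (N^2)⁻¹ * cn = e n := by
      rw [hcn]; simp only [he]
      split_ifs with h
      · have hφN : 0 < φ N := ha N (le_trans hax h)
        rw [hNdef]
        field_simp
      · exact mul_zero _
    calc (((n : ℝ≥0∞) + 1) ^ 2)⁻¹ *
          ∫⁻ ω, ENNReal.ofReal (if X (n+1) ω ≤ N then (X (n+1) ω)^2 else 0) ∂μ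
        ≤ (((n : ℝ≥0∞) + 1) ^ 2)⁻¹ * (ENNReal.ofReal (x₀^2) + ENNReal.ofReal cn * M) := by
          gcongr
      _ = (((n : ℝ≥0∞) + 1) ^ 2)⁻¹ * ENNReal.ofReal (x₀^2) + ENNReal.ofReal (e n) * M := by
          rw [mul_add]
          congr 1
          rw [← mul_assoc, hinv, ← ENNReal.ofReal_mul (by positivity), hen]
  -- two finite sums
  have hsum1 : (∑' n : ℕ, (((n : ℝ≥0∞) + 1) ^ 2)⁻¹) < ⊤ := by
    have hre : Summable (fun n : ℕ => (((n:ℝ)+1)^2)⁻¹) := by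
      have h2 : Summable (fun n : ℕ => ((n:ℝ)^2)⁻¹) := by
        simpa [one_div] using Real.summable_one_div_nat_pow.mpr (by norm_num : 1 < 2)
      have := (summable_nat_add_iff (f := fun n : ℕ => ((n:ℝ)^2)⁻¹) 1).mpr h2
      simpa using this
    have heq : ∀ n : ℕ, (((n : ℝ≥0∞) + 1) ^ 2)⁻¹ = ENNReal.ofReal ((((n:ℝ)+1)^2)⁻¹) := by
      intro n
      have h1 : ((n : ℝ≥0∞) + 1) = ENNReal.ofReal ((n:ℝ)+1) := by
        rw [ENNReal.ofReal_add (Nat.cast_nonneg n) zero_le_one]; simp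
      rw [h1, ← ENNReal.ofReal_pow (by positivity), ENNReal.ofReal_inv_of_pos (by positivity)]
    calc (∑' n : ℕ, (((n : ℝ≥0∞) + 1) ^ 2)⁻¹)
        = ∑' n : ℕ, ENNReal.ofReal ((((n:ℝ)+1)^2)⁻¹) := by
          exact tsum_congr heq
      _ = ENNReal.ofReal (∑' n : ℕ, (((n:ℝ)+1)^2)⁻¹) :=
          (ENNReal.ofReal_tsum_of_nonneg (fun n => by positivity) hre).symm
      _ < ⊤ := ENNReal.ofReal_lt_top
  have hsum2 : (∑' n : ℕ, ENNReal.ofReal (e n)) < ⊤ := by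
    rw [← ENNReal.ofReal_tsum_of_nonneg he_nonneg he_sum]
    exact ENNReal.ofReal_lt_top
  calc (∑' n : ℕ, (((n : ℝ≥0∞) + 1) ^ 2)⁻¹ *
        ∫⁻ ω, ENNReal.ofReal (if X (n+1) ω ≤ (n:ℝ)+1 then (X (n+1) ω)^2 else 0) ∂μ)
      ≤ ∑' n : ℕ, ((((n : ℝ≥0∞) + 1) ^ 2)⁻¹ * ENNReal.ofReal (x₀^2) +
          ENNReal.ofReal (e n) * M) := ENNReal.tsum_le_tsum hterm
    _ = (∑' n : ℕ, (((n : ℝ≥0∞) + 1) ^ 2)⁻¹ * ENNReal.ofReal (x₀^2)) +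
        ∑' n : ℕ, ENNReal.ofReal (e n) * M := ENNReal.tsum_add
    _ = (∑' n : ℕ, (((n : ℝ≥0∞) + 1) ^ 2)⁻¹) * ENNReal.ofReal (x₀^2) +
        (∑' n : ℕ, ENNReal.ofReal (e n)) * M := by
        rw [ENNReal.tsum_mul_right, ENNReal.tsum_mul_right]
    _ < ⊤ := by
        apply ENNReal.add_lt_top.mpr
        exact ⟨ENNReal.mul_lt_top hsum1 ENNReal.ofReal_lt_top,
          ENNReal.mul_lt_top hsum2 hMtop⟩
end
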